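/- arXiv:1811.04052 — 7 statements merged into one kernel-verified Lean document; each statement's English description precedes it below -/
import Mathlib

section
/- Let δ > 0 and let G be a connected normalized weighted graph with n ≥ 2 vertices such that every 2-way split of G has weight at least (1+δ)/n (equivalently, density at least (1+δ)/n). Then G contains a matching M whose total weight satisfies w(M) ≥ δ² / (16 · β(G) · (1+δ)). -/
open Finset

namespace KCut

open scoped Classical

/-- Number of connected components of a graph. -/
noncomputable def numComp {V : Type*} (G : SimpleGraph V) : ℕ :=
  Nat.card G.ConnectedComponent

/-- `S` is an `h`-way split of `G`: a set of edges of `G` whose removal increases the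
number of connected components by `h - 1`. -/
def IsSplit {V : Type*} (G : SimpleGraph V) (S : Finset (Sym2 V)) (h : ℕ) : Prop :=
  ↑S ⊆ G.edgeSet ∧ numComp (G.deleteEdges ↑S) = (h - 1) + numComp G

/-- Total weight of a finite set of edges. -/
noncomputable def weight {V : Type*} (w : Sym2 V → ℝ) (S : Finset (Sym2 V)) : ℝ :=
  ∑ e ∈ S, w e

/-- Density of an `h`-way split: its weight divided by `h - 1`. -/
noncomputable def density {V : Type*} (w : Sym2 V → ℝ) (S : Finset (Sym2 V)) (h : ℕ) : ℝ :=
  weight w S / ((h : ℝ) - 1)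

/-- `β(G) = |E|/|V|`. -/
noncomputable def beta {V : Type*} [Fintype V] (G : SimpleGraph V) [Fintype G.edgeSet] : ℝ :=
  (G.edgeFinset.card : ℝ) / (Fintype.card V : ℝ)

/-- A matching: a set of pairwise vertex-disjoint edges of `G`. -/
def IsMatchingSet {V : Type*} (G : SimpleGraph V) (M : Finset (Sym2 V)) : Prop :=
  ↑M ⊆ G.edgeSet ∧ ∀ e ∈ M, ∀ f ∈ M, e ≠ f → ∀ v : V, v ∈ e → v ∉ f

/-- A minimum `h`-way split: an `h`-way split of minimum total weight. -/
def IsMinSplit {V : Type*} (G : SimpleGraph V) (w : Sym2 V → ℝ)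
    (S : Finset (Sym2 V)) (h : ℕ) : Prop :=
  IsSplit G S h ∧ ∀ T : Finset (Sym2 V), IsSplit G T h → weight w S ≤ weight w T

/-- An `h`-way split `S` is sparse if no split of separation degree at most `h`
has smaller density. -/
def IsSparse {V : Type*} (G : SimpleGraph V) (w : Sym2 V → ℝ)
    (S : Finset (Sym2 V)) (h : ℕ) : Prop :=
  ∀ h' : ℕ, h' ≤ h → 2 ≤ h' → ∀ S' : Finset (Sym2 V), IsSplit G S' h' →
    density w S h ≤ density w S' h'
lemma numComp_eq_one {V : Type*} {G : SimpleGraph V} (h : G.Connected) : numComp G = 1 := by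
  have h1 : Subsingleton G.ConnectedComponent := by
    constructor
    intro a b
    exact SimpleGraph.ConnectedComponent.ind₂
      (fun v w => SimpleGraph.ConnectedComponent.sound (h.preconnected v w)) a b
  have h2 : Nonempty G.ConnectedComponent := by
    have hne : Nonempty V := h.nonempty
    exact ⟨G.connectedComponentMk (Classical.arbitrary V)⟩
  exact Nat.card_eq_one_iff_unique.mpr ⟨h1, h2⟩

lemma exists_split_at {V : Type*} [Fintype V] (G : SimpleGraph V)
    (hconn : G.Connected) (hn : 2 ≤ Fintype.card V) (u : V) :
    ∃ S : Finset (Sym2 V), (∀ e ∈ S, u ∈ e) ∧ IsSplit G S 2 := by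
  obtain ⟨z, hz⟩ := Fintype.exists_ne_of_one_lt_card (by omega) u
  set H : SimpleGraph V := G.deleteEdges {e : Sym2 V | u ∈ e} with hH
  have hHadj : ∀ x y : V, H.Adj x y ↔ G.Adj x y ∧ x ≠ u ∧ y ≠ u := by
    intro x y
    rw [hH, SimpleGraph.deleteEdges_adj]
    simp only [Set.mem_setOf_eq, Sym2.mem_iff]
    constructor
    · rintro ⟨ha, hb⟩
      push_neg at hb
      exact ⟨ha, (fun h => hb.1 h.symm), (fun h => hb.2 h.symm)⟩
    · rintro ⟨ha, hb, hc⟩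
      refine ⟨ha, ?_⟩
      push_neg
      exact ⟨fun h => hb h.symm, fun h => hc h.symm⟩
  set S : Finset (Sym2 V) :=
    G.edgeFinset.filter (fun e => ∃ x, H.Reachable z x ∧ e = s(u, x)) with hS
  have hSmem : ∀ e ∈ S, u ∈ e := by
    intro e he
    rw [hS, Finset.mem_filter] at he
    obtain ⟨-, x, -, rfl⟩ := he
    simp
  have huC : ¬ H.Reachable z u := by
    intro h
    obtain ⟨p⟩ := h.symm
    cases p with
    | nil => exact hz rfl
    | cons h' p' => exact ((hHadj _ _).mp h').2.1 rfl
  set G' : SimpleGraph V := G.deleteEdges ↑S with hG'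
  have hG'adj : ∀ x y : V, G'.Adj x y ↔ G.Adj x y ∧ s(x, y) ∉ S := by
    intro x y
    rw [hG', SimpleGraph.deleteEdges_adj]
    simp
  -- step lemma for P
  have stepP : ∀ x y : V, G.Adj x y →
      (G'.Reachable u x ∨ H.Reachable z x) → (G'.Reachable u y ∨ H.Reachable z y) := by
    intro x y hxy hPx
    by_cases hSxy : s(x, y) ∈ S
    · rw [hS, Finset.mem_filter] at hSxy
      obtain ⟨-, c, hc, heq⟩ := hSxy
      rw [Sym2.eq_iff] at heq
      rcases heq with ⟨rfl, rfl⟩ | ⟨rfl, hyu⟩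
      · exact Or.inr hc
      · refine Or.inl ?_
        rw [hyu]
    · by_cases hxu : x = u
      · refine Or.inl ?_
        rw [← hxu]
        exact ((hG'adj x y).mpr ⟨hxy, hSxy⟩).reachable
      · by_cases hyu : y = u
        · refine Or.inl ?_
          rw [hyu]
        · have hG'xy : G'.Adj x y := (hG'adj x y).mpr ⟨hxy, hSxy⟩
          have hHxy : H.Adj x y := (hHadj x y).mpr ⟨hxy, hxu, hyu⟩
          rcases hPx with h | h
          · exact Or.inl (h.trans hG'xy.reachable)
          · exact Or.inr (h.trans hHxy.reachable)
  have walkP : ∀ (a b : V), G.Walk a b →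
      (G'.Reachable u a ∨ H.Reachable z a) → (G'.Reachable u b ∨ H.Reachable z b) := by
    intro a b p
    induction p with
    | nil => exact id
    | cons h' p' ih => exact fun hp => ih (stepP _ _ h' hp)
  have hP : ∀ x : V, G'.Reachable u x ∨ H.Reachable z x := by
    intro x
    obtain ⟨p⟩ := hconn.preconnected u x
    exact walkP u x p (Or.inl (SimpleGraph.Reachable.refl u))
  -- invariant Q
  have stepQ : ∀ x y : V, G'.Adj x y → H.Reachable z x → H.Reachable z y := by
    intro x y hxy hx
    obtain ⟨hGxy, hSxy⟩ := (hG'adj x y).mp hxy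
    by_cases hxu : x = u
    · exact absurd (hxu ▸ hx) huC
    · by_cases hyu : y = u
      · exfalso
        apply hSxy
        rw [hS, Finset.mem_filter]
        refine ⟨SimpleGraph.mem_edgeFinset.mpr ((SimpleGraph.mem_edgeSet G).mpr hGxy), x, hx, ?_⟩
        rw [hyu]
        exact Sym2.eq_swap
      · exact hx.trans ((hHadj x y).mpr ⟨hGxy, hxu, hyu⟩).reachable
  have walkQ : ∀ (a b : V), G'.Walk a b → H.Reachable z a → H.Reachable z b := by
    intro a b p
    induction p with
    | nil => exact id
    | cons h' p' ih => exact fun hp => ih (stepQ _ _ h' hp)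
  have hnotr : ¬ G'.Reachable u z := by
    intro h
    obtain ⟨p⟩ := h.symm
    exact huC (walkQ z u p (SimpleGraph.Reachable.refl z))
  have hcard : numComp G' = 2 := by
    rw [numComp, Nat.card_eq_two_iff]
    refine ⟨G'.connectedComponentMk u, G'.connectedComponentMk z, ?_, ?_⟩
    · intro h
      exact hnotr (SimpleGraph.ConnectedComponent.exact h)
    · apply Set.eq_univ_of_forall
      intro c
      refine SimpleGraph.ConnectedComponent.ind (fun x => ?_) c
      rcases hP x with h | h
      · exact Or.inl (SimpleGraph.ConnectedComponent.sound h.symm)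
      · refine Or.inr ?_
        simp only [Set.mem_singleton_iff]
        have : G'.Reachable z x := by
          have hle : H ≤ G' := by
            intro a b hab
            rw [hG'adj]
            obtain ⟨hGab, hau, hbu⟩ := (hHadj a b).mp hab
            refine ⟨hGab, fun hmem => ?_⟩
            have := hSmem _ hmem
            rw [Sym2.mem_iff] at this
            rcases this with h1 | h1
            · exact hau h1.symm
            · exact hbu h1.symm
          exact h.mono hle
        exact SimpleGraph.ConnectedComponent.sound this.symm
  refine ⟨S, hSmem, ?_, ?_⟩
  · intro e he
    rw [Finset.mem_coe, hS, Finset.mem_filter] at he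
    exact SimpleGraph.mem_edgeFinset.mp he.1
  · rw [hcard, numComp_eq_one hconn]

lemma sym2_filter_card_le {V : Type*} [Fintype V] [DecidableEq V]
    (U : Finset V) (e : Sym2 V) : (U.filter (fun v => v ∈ e)).card ≤ 2 := by
  induction e using Sym2.ind with
  | _ a b =>
    have hsub : U.filter (fun v => v ∈ s(a, b)) ⊆ {a, b} := by
      intro v hv
      rw [Finset.mem_filter, Sym2.mem_iff] at hv
      rcases hv.2 with rfl | rfl <;> simp
    calc (U.filter (fun v => v ∈ s(a, b))).card ≤ ({a, b} : Finset V).card :=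
          Finset.card_le_card hsub
      _ ≤ 2 := (Finset.card_insert_le _ _).trans (by simp)

set_option maxHeartbeats 1000000 in
theorem heavy_matching_of_two_way_split_bound
    {V : Type*} [Fintype V] [DecidableEq V]
    (G : SimpleGraph V) [DecidableRel G.Adj]
    (w : Sym2 V → ℝ) (hw : ∀ e ∈ G.edgeSet, 0 < w e)
    (hconn : G.Connected)
    (hnorm : weight w G.edgeFinset = 1)
    (hn : 2 ≤ Fintype.card V)
    (δ : ℝ) (hδ : 0 < δ)
    (hsplit : ∀ S : Finset (Sym2 V), IsSplit G S 2 →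
      (1 + δ) / (Fintype.card V : ℝ) ≤ weight w S) :
    ∃ M : Finset (Sym2 V), IsMatchingSet G M ∧
      δ ^ 2 / (16 * beta G * (1 + δ)) ≤ weight w M := by
  have hwnn : ∀ e ∈ G.edgeFinset, 0 ≤ w e := fun e he =>
    (hw e (SimpleGraph.mem_edgeFinset.mp he)).le
  set n : ℕ := Fintype.card V with hn'
  set m : ℕ := G.edgeFinset.card with hm'
  clear_value n m
  have hVne : Nonempty V := hconn.nonempty
  have hncard : 2 ≤ Fintype.card V := by rw [← hn']; exact hn
  have hm1 : 1 ≤ m := by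
    obtain ⟨z, hz⟩ := Fintype.exists_ne_of_one_lt_card (by omega) (Classical.arbitrary V)
    obtain ⟨p⟩ := hconn.preconnected z (Classical.arbitrary V)
    cases p with
    | nil => exact absurd rfl hz
    | cons h' _ =>
      have : G.edgeFinset.Nonempty :=
        ⟨_, SimpleGraph.mem_edgeFinset.mpr ((SimpleGraph.mem_edgeSet G).mpr h')⟩
      have := Finset.card_pos.mpr this
      rw [hm']
      omega
  have hn2 : 2 ≤ n := hn
  have hNpos : (0:ℝ) < (n : ℝ) := by
    have : 0 < n := by omega
    exact_mod_cast this
  have hmpos : (0:ℝ) < (m : ℝ) := by exact_mod_cast hm1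
  set θ : ℝ := δ / (4 * (m : ℝ)) with hθ
  clear_value θ
  have h4m : (0:ℝ) < 4 * (m : ℝ) := by linarith
  have hθpos : 0 < θ := by rw [hθ]; exact div_pos hδ h4m
  set F : Finset (Sym2 V) := G.edgeFinset.filter (fun e => θ ≤ w e) with hF
  clear_value F
  -- maximal matching inside F
  set 𝒜 : Finset (Finset (Sym2 V)) := F.powerset.filter
    (fun M => ∀ e ∈ M, ∀ f ∈ M, e ≠ f → ∀ v : V, v ∈ e → v ∉ f) with h𝒜
  clear_value 𝒜
  have h𝒜ne : 𝒜.Nonempty := by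
    refine ⟨∅, ?_⟩
    rw [h𝒜, Finset.mem_filter]
    exact ⟨Finset.empty_mem_powerset F, by simp⟩
  obtain ⟨M, hM𝒜, hMmax⟩ := Finset.exists_max_image 𝒜 Finset.card h𝒜ne
  rw [h𝒜, Finset.mem_filter, Finset.mem_powerset] at hM𝒜
  obtain ⟨hMF, hMmatch⟩ := hM𝒜
  have hMF' : M ⊆ G.edgeFinset.filter (fun e => θ ≤ w e) := by rw [← hF]; exact hMF
  -- maximality: every heavy edge meets M
  have hblock : ∀ e ∈ G.edgeFinset, θ ≤ w e → ¬ (∀ f ∈ M, ∀ v : V, v ∈ e → v ∉ f) := by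
    intro e he hwe hdisj
    have heF : e ∈ F := by rw [hF, Finset.mem_filter]; exact ⟨he, hwe⟩
    have heM : e ∉ M := by
      intro hmem
      exact hdisj e hmem e.out.1 (Sym2.out_fst_mem e) (Sym2.out_fst_mem e)
    have hM' : insert e M ∈ 𝒜 := by
      rw [h𝒜, Finset.mem_filter, Finset.mem_powerset]
      refine ⟨Finset.insert_subset heF hMF, ?_⟩
      intro e1 h1 f1 h2 hne v hv
      rcases Finset.mem_insert.mp h1 with rfl | h1 <;>
        rcases Finset.mem_insert.mp h2 with h2' | h2'
      · exact absurd h2' (Ne.symm hne)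
      · exact hdisj f1 h2' v hv
      · intro hvf
        rw [h2'] at hvf
        exact hdisj e1 h1 v hvf hv
      · exact hMmatch e1 h1 f1 h2' hne v hv
    have := hMmax _ hM'
    rw [Finset.card_insert_of_notMem heM] at this
    omega
  set U : Finset V := Finset.univ.filter (fun v => ∀ e ∈ M, v ∉ e) with hU
  clear_value U
  have hUmem : ∀ v ∈ U, ∀ e ∈ M, v ∉ e := by
    intro v hv
    rw [hU, Finset.mem_filter] at hv
    exact hv.2
  -- vertex cut bound
  have hcut : ∀ u : V, (1 + δ) / (n : ℝ) ≤ weight w (G.edgeFinset.filter (fun e => u ∈ e)) := by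
    intro u
    obtain ⟨S, hSu, hS2⟩ := exists_split_at G hconn hncard u
    refine (hsplit S hS2).trans ?_
    apply Finset.sum_le_sum_of_subset_of_nonneg
    · intro e he
      rw [Finset.mem_filter]
      exact ⟨SimpleGraph.mem_edgeFinset.mpr (hS2.1 he), hSu e he⟩
    · intro e he _
      exact hwnn e (Finset.mem_filter.mp he).1
  -- sum swap
  have hswap : ∑ u ∈ U, weight w (G.edgeFinset.filter (fun e => u ∈ e))
      = ∑ e ∈ G.edgeFinset, ((U.filter (fun v => v ∈ e)).card : ℝ) * w e := by
    calc ∑ u ∈ U, weight w (G.edgeFinset.filter (fun e => u ∈ e))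
        = ∑ u ∈ U, ∑ e ∈ G.edgeFinset, if u ∈ e then w e else 0 := by
          refine Finset.sum_congr rfl fun u _ => ?_
          rw [weight, Finset.sum_filter]
      _ = ∑ e ∈ G.edgeFinset, ∑ u ∈ U, if u ∈ e then w e else 0 := Finset.sum_comm
      _ = ∑ e ∈ G.edgeFinset, ((U.filter (fun v => v ∈ e)).card : ℝ) * w e := by
          refine Finset.sum_congr rfl fun e _ => ?_
          rw [← Finset.sum_filter, Finset.sum_const, nsmul_eq_mul]
  -- per-edge bound
  have hedge : ∀ e ∈ G.edgeFinset,
      ((U.filter (fun v => v ∈ e)).card : ℝ) * w e ≤ w e + θ := by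
    intro e he
    have hwpos := hw e (SimpleGraph.mem_edgeFinset.mp he)
    have hcle := sym2_filter_card_le U e
    by_cases hc2 : (U.filter (fun v => v ∈ e)).card = 2
    · obtain ⟨⟨a, b⟩, rfl⟩ := e.exists_rep
      have hadj : G.Adj a b := (SimpleGraph.mem_edgeSet G).mp (SimpleGraph.mem_edgeFinset.mp he)
      have hab : a ≠ b := hadj.ne
      have hsub : U.filter (fun v => v ∈ s(a, b)) ⊆ {a, b} := by
        intro v hv
        rw [Finset.mem_filter, Sym2.mem_iff] at hv
        rcases hv.2 with rfl | rfl <;> simp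
      have hfeq : U.filter (fun v => v ∈ s(a, b)) = {a, b} := by
        apply Finset.eq_of_subset_of_card_le hsub
        rw [Finset.card_pair hab, hc2]
      have haU : a ∈ U := by
        have : a ∈ U.filter (fun v => v ∈ s(a, b)) := by rw [hfeq]; simp
        exact (Finset.mem_filter.mp this).1
      have hbU : b ∈ U := by
        have : b ∈ U.filter (fun v => v ∈ s(a, b)) := by rw [hfeq]; simp
        exact (Finset.mem_filter.mp this).1
      have hlt : w s(a, b) < θ := by
        by_contra hge
        push_neg at hge
        refine hblock s(a, b) he hge ?_
        intro f hf v hv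
        rw [Sym2.mem_iff] at hv
        have hvU : v ∈ U := by
          rcases hv with h | h
          · rw [h]; exact haU
          · rw [h]; exact hbU
        exact hUmem v hvU f hf
      rw [hc2]
      push_cast
      linarith
    · have hc1 : (U.filter (fun v => v ∈ e)).card ≤ 1 := by omega
      have : ((U.filter (fun v => v ∈ e)).card : ℝ) ≤ 1 := by exact_mod_cast hc1
      nlinarith
  -- counting: |U| λ ≤ 1 + θ m
  have hlow : (U.card : ℝ) * ((1 + δ) / (n : ℝ))
      ≤ ∑ u ∈ U, weight w (G.edgeFinset.filter (fun e => u ∈ e)) := by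
    have := Finset.card_nsmul_le_sum U
      (fun u => weight w (G.edgeFinset.filter (fun e => u ∈ e)))
      ((1 + δ) / (n : ℝ)) (fun u _ => hcut u)
    rwa [nsmul_eq_mul] at this
  have hup : ∑ e ∈ G.edgeFinset, ((U.filter (fun v => v ∈ e)).card : ℝ) * w e
      ≤ 1 + θ * (m : ℝ) := by
    calc ∑ e ∈ G.edgeFinset, ((U.filter (fun v => v ∈ e)).card : ℝ) * w e
        ≤ ∑ e ∈ G.edgeFinset, (w e + θ) := Finset.sum_le_sum hedge
      _ = (∑ e ∈ G.edgeFinset, w e) + (m : ℝ) * θ := by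
          rw [Finset.sum_add_distrib, Finset.sum_const, nsmul_eq_mul, hm']
      _ = 1 + θ * (m : ℝ) := by
          rw [show (∑ e ∈ G.edgeFinset, w e) = weight w G.edgeFinset from rfl, hnorm]
          ring
  have hkey1 : (U.card : ℝ) * ((1 + δ) / (n : ℝ)) ≤ 1 + θ * (m : ℝ) := by
    rw [hswap] at hlow
    linarith
  -- covered vertices
  have hcount : (n : ℝ) ≤ (U.card : ℝ) + 2 * (M.card : ℝ) := by
    have hsplitcard : U.card + (Finset.univ.filter (fun v => ¬ ∀ e ∈ M, v ∉ e)).card = n := by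
      rw [hU, hn']
      rw [Finset.card_filter_add_card_filter_not]
      exact Finset.card_univ
    have hcov : (Finset.univ.filter (fun v => ¬ ∀ e ∈ M, v ∉ e)).card ≤ 2 * M.card := by
      have hsub : (Finset.univ.filter (fun v => ¬ ∀ e ∈ M, v ∉ e))
          ⊆ M.biUnion (fun e => Finset.univ.filter (fun v => v ∈ e)) := by
        intro v hv
        rw [Finset.mem_filter] at hv
        push_neg at hv
        obtain ⟨e, he, hve⟩ := hv.2
        exact Finset.mem_biUnion.mpr ⟨e, he, Finset.mem_filter.mpr ⟨Finset.mem_univ v, hve⟩⟩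
      calc (Finset.univ.filter (fun v => ¬ ∀ e ∈ M, v ∉ e)).card
          ≤ (M.biUnion (fun e => Finset.univ.filter (fun v => v ∈ e))).card :=
            Finset.card_le_card hsub
        _ ≤ ∑ e ∈ M, (Finset.univ.filter (fun v => v ∈ e)).card := Finset.card_biUnion_le
        _ ≤ ∑ _e ∈ M, 2 := Finset.sum_le_sum fun e _ => sym2_filter_card_le _ e
        _ = 2 * M.card := by rw [Finset.sum_const]; ring
    have : (n : ℕ) ≤ U.card + 2 * M.card := by omega
    exact_mod_cast this
  -- matching weight lower bound
  have hnne : (n : ℝ) ≠ 0 := hNpos.ne'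
  have hmne : (m : ℝ) ≠ 0 := hmpos.ne'
  have hMw : θ * (M.card : ℝ) ≤ weight w M := by
    have h0 := Finset.card_nsmul_le_sum M w θ
      (fun e he => (Finset.mem_filter.mp (hMF' he)).2)
    rw [nsmul_eq_mul] at h0
    rw [weight]
    linarith
  have hWnn : 0 ≤ weight w M :=
    le_trans (mul_nonneg hθpos.le (Nat.cast_nonneg _)) hMw
  -- final algebra
  have hθm : θ * (m : ℝ) = δ / 4 := by
    rw [hθ, div_mul_eq_mul_div, mul_comm δ (m : ℝ), mul_comm (4 : ℝ) (m : ℝ),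
      mul_div_mul_left _ _ hmne]
  have h1 : (U.card : ℝ) * (1 + δ) ≤ (1 + δ / 4) * (n : ℝ) := by
    have hmul := mul_le_mul_of_nonneg_right hkey1 hNpos.le
    rw [hθm] at hmul
    have hls : (U.card : ℝ) * ((1 + δ) / (n : ℝ)) * (n : ℝ) = (U.card : ℝ) * (1 + δ) := by
      rw [mul_assoc, div_mul_cancel₀ _ hnne]
    linarith
  have h2 : 3 * δ / 4 * (n : ℝ) ≤ 2 * (M.card : ℝ) * (1 + δ) := by
    have hub : (n : ℝ) - (U.card : ℝ) ≤ 2 * (M.card : ℝ) := by linarith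
    nlinarith [mul_le_mul_of_nonneg_right hub (by linarith : (0:ℝ) ≤ 1 + δ)]
  have h3 : δ * (M.card : ℝ) ≤ 4 * (m : ℝ) * weight w M := by
    have hmul := mul_le_mul_of_nonneg_left hMw h4m.le
    have h4 : 4 * (m : ℝ) * θ = δ := by linarith [hθm]
    have hexp : 4 * (m : ℝ) * (θ * (M.card : ℝ)) = δ * (M.card : ℝ) := by
      rw [show 4 * (m : ℝ) * (θ * (M.card : ℝ))
        = (4 * (m : ℝ) * θ) * (M.card : ℝ) from by ring, h4]
    linarith
  have hkey : δ ^ 2 * (n : ℝ) ≤ 16 * (m : ℝ) * (1 + δ) * weight w M := by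
    have ha := mul_le_mul_of_nonneg_left h2 hδ.le
    have hb := mul_le_mul_of_nonneg_left h3 (by linarith : (0:ℝ) ≤ 1 + δ)
    have hc : 0 ≤ (m : ℝ) * ((1 + δ) * weight w M) :=
      mul_nonneg hmpos.le (mul_nonneg (by linarith) hWnn)
    nlinarith
  refine ⟨M, ⟨?_, hMmatch⟩, ?_⟩
  · intro e he
    rw [Finset.mem_coe] at he
    exact SimpleGraph.mem_edgeFinset.mp (Finset.mem_filter.mp (hMF' he)).1
  · have hbeta : beta G = (m : ℝ) / (n : ℝ) := by simp only [beta, hm', hn']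
    have hbpos : (0:ℝ) < 16 * ((m : ℝ) / (n : ℝ)) * (1 + δ) :=
      mul_pos (mul_pos (by norm_num) (div_pos hmpos hNpos)) (by linarith)
    rw [hbeta, div_le_iff₀ hbpos]
    have hexp : weight w M * (16 * ((m : ℝ) / (n : ℝ)) * (1 + δ))
        = 16 * (m : ℝ) * (1 + δ) * weight w M / (n : ℝ) := by
      rw [div_eq_mul_inv, div_eq_mul_inv]
      ring
    rw [hexp, le_div_iff₀ hNpos]
    linarith

end KCut
end

section
/- Let δ > 0 and let G be a connected normalized weighted graph with n ≥ 2 vertices such that every 2-way split of G has weight at least (1+δ)/n. Set d = 4 · β(G) · (1+δ)/δ and let B be the set of vertices of G whose degree is strictly less than d. Then the total weight of the edges having both endpoints in B is at least δ/2. -/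
open Finset

namespace KCut

open scoped Classical

open SimpleGraph in
lemma reachable_delete_cases {V : Type*} {H : SimpleGraph V} {a b x y : V}
    (h : H.Reachable x y) :
    (H.deleteEdges {s(a,b)}).Reachable x y ∨
    ((H.deleteEdges {s(a,b)}).Reachable x a ∧ (H.deleteEdges {s(a,b)}).Reachable b y) ∨
    ((H.deleteEdges {s(a,b)}).Reachable x b ∧ (H.deleteEdges {s(a,b)}).Reachable a y) := by
  set H' := H.deleteEdges {s(a,b)} with hH'
  obtain ⟨p⟩ := h
  induction p with
  | nil => exact Or.inl (Reachable.refl _)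
  | @cons u v' y hadj p ih =>
    by_cases he : s(u, v') = s(a, b)
    · rw [Sym2.eq_iff] at he
      rcases he with ⟨rfl, rfl⟩ | ⟨rfl, rfl⟩
      · rcases ih with h1 | ⟨h1, h2⟩ | ⟨h1, h2⟩
        · exact Or.inr (Or.inl ⟨Reachable.refl _, h1⟩)
        · exact Or.inl (h1.symm.trans h2)
        · exact Or.inl h2
      · rcases ih with h1 | ⟨h1, h2⟩ | ⟨h1, h2⟩
        · exact Or.inr (Or.inr ⟨Reachable.refl _, h1⟩)
        · exact Or.inl h2
        · exact Or.inl (h1.symm.trans h2)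
    · have hadj' : H'.Adj u v' := by
        rw [hH', SimpleGraph.deleteEdges_adj]
        exact ⟨hadj, by simpa using he⟩
      rcases ih with h1 | ⟨h1, h2⟩ | ⟨h1, h2⟩
      · exact Or.inl (hadj'.reachable.trans h1)
      · exact Or.inr (Or.inl ⟨hadj'.reachable.trans h1, h2⟩)
      · exact Or.inr (Or.inr ⟨hadj'.reachable.trans h1, h2⟩)

open SimpleGraph in
lemma numComp_deleteEdges_single_le {V : Type*} [Finite V] (H : SimpleGraph V) (a b : V) :
    numComp (H.deleteEdges {s(a,b)}) ≤ numComp H + 1 := by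
  classical
  set H' := H.deleteEdges {s(a,b)} with hH'
  let f : H'.ConnectedComponent → H.ConnectedComponent :=
    ConnectedComponent.map (Hom.ofLE (H.deleteEdges_le _))
  have hf : ∀ x : V, f (H'.connectedComponentMk x) = H.connectedComponentMk x := fun x => rfl
  have key : ∀ x y : V, H'.connectedComponentMk x ≠ H'.connectedComponentMk a →
      H'.connectedComponentMk y ≠ H'.connectedComponentMk a →
      H.Reachable x y → H'.connectedComponentMk x = H'.connectedComponentMk y := by
    intro x y hx hy hr
    rcases reachable_delete_cases (a := a) (b := b) hr with h1 | ⟨h1, h2⟩ | ⟨h1, h2⟩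
    · exact ConnectedComponent.sound h1
    · exact absurd (ConnectedComponent.sound h1) hx
    · exact absurd (ConnectedComponent.sound h2.symm) hy
  let g : H'.ConnectedComponent → H.ConnectedComponent ⊕ Unit :=
    fun c => if c = H'.connectedComponentMk a then Sum.inr () else Sum.inl (f c)
  have hginj : Function.Injective g := by
    intro c c' hcc
    by_cases h1 : c = H'.connectedComponentMk a <;>
      by_cases h2 : c' = H'.connectedComponentMk a <;>
      simp only [g, h1, h2, if_pos, if_neg, if_true, if_false] at hcc ⊢
    · exact absurd hcc (by simp)
    · exact absurd hcc (by simp)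
    · simp only [Sum.inl.injEq] at hcc
      obtain ⟨x, rfl⟩ := c.exists_rep
      obtain ⟨y, rfl⟩ := c'.exists_rep
      have hr : H.Reachable x y := by
        have : H.connectedComponentMk x = H.connectedComponentMk y := hcc
        exact (ConnectedComponent.eq).mp this
      exact key x y h1 h2 hr
  calc numComp H' ≤ Nat.card (H.ConnectedComponent ⊕ Unit) :=
        Nat.card_le_card_of_injective g hginj
    _ = numComp H + 1 := by rw [Nat.card_sum]; simp [numComp]

open SimpleGraph in
lemma exists_split_subset {V : Type*} [Finite V] (G : SimpleGraph V) (S : Finset (Sym2 V))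
    (hS : numComp G + 1 ≤ numComp (G.deleteEdges ↑S)) :
    ∃ T ⊆ S, numComp (G.deleteEdges ↑T) = numComp G + 1 := by
  classical
  induction S using Finset.strongInduction with
  | _ S ih =>
    rcases eq_or_lt_of_le hS with heq | hlt
    · exact ⟨S, Finset.Subset.refl S, heq.symm⟩
    · have hne : S.Nonempty := by
        rcases S.eq_empty_or_nonempty with rfl | h
        · simp only [Finset.coe_empty, SimpleGraph.deleteEdges_empty] at hS
          omega
        · exact h
      obtain ⟨e, he⟩ := hne
      have hdel : G.deleteEdges ↑S = (G.deleteEdges ↑(S.erase e)).deleteEdges {e} := by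
        rw [SimpleGraph.deleteEdges_deleteEdges]
        congr 1
        rw [Finset.coe_erase]
        ext x
        simp only [Set.union_singleton, Set.mem_insert_iff, Set.mem_diff, Set.mem_singleton_iff,
          Finset.mem_coe]
        constructor
        · intro hx
          by_cases hxe : x = e
          · exact Or.inl hxe
          · exact Or.inr ⟨hx, hxe⟩
        · rintro (rfl | ⟨hx, _⟩)
          · exact he
          · exact hx
      have hle : numComp (G.deleteEdges ↑S) ≤ numComp (G.deleteEdges ↑(S.erase e)) + 1 := by
        rw [hdel]
        obtain ⟨⟨a, b⟩, rfl⟩ := e.exists_rep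
        exact numComp_deleteEdges_single_le _ a b
      obtain ⟨T, hT, hTeq⟩ := ih (S.erase e) (Finset.erase_ssubset he) (by omega)
      exact ⟨T, hT.trans (Finset.erase_subset _ _), hTeq⟩


theorem heavy_edges_within_low_degree_vertices
    {V : Type*} [Fintype V] [DecidableEq V]
    (G : SimpleGraph V) [DecidableRel G.Adj]
    (w : Sym2 V → ℝ) (hw : ∀ e ∈ G.edgeSet, 0 < w e)
    (hconn : G.Connected)
    (hnorm : weight w G.edgeFinset = 1)
    (hn : 2 ≤ Fintype.card V)
    (δ : ℝ) (hδ : 0 < δ)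
    (hsplit : ∀ S : Finset (Sym2 V), IsSplit G S 2 →
      (1 + δ) / (Fintype.card V : ℝ) ≤ weight w S)
    (d : ℝ) (hd : d = 4 * beta G * (1 + δ) / δ)
    (B : Finset V) (hB : B = Finset.univ.filter (fun v => (G.degree v : ℝ) < d)) :
    δ / 2 ≤ weight w (G.edgeFinset.filter (fun e => ∀ v ∈ e, v ∈ B)) := by
  classical
  have hV : Nonempty V := Fintype.card_pos_iff.mp (by omega)
  set n : ℝ := (Fintype.card V : ℝ) with hndef
  have npos : (0 : ℝ) < n := by
    rw [hndef]; exact_mod_cast (by omega : 0 < Fintype.card V)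
  -- G has exactly one component
  have hc1 : numComp G = 1 := by
    rw [numComp, Nat.card_eq_one_iff_unique]
    refine ⟨⟨fun c c' => ?_⟩, ⟨G.connectedComponentMk (Classical.arbitrary V)⟩⟩
    obtain ⟨x, rfl⟩ := c.exists_rep
    obtain ⟨y, rfl⟩ := c'.exists_rep
    exact SimpleGraph.ConnectedComponent.sound (hconn.preconnected x y)
  -- star weight lower bound
  have hstar : ∀ v : V, (1 + δ) / n ≤ weight w (G.incidenceFinset v) := by
    intro v
    have hcoe : (↑(G.incidenceFinset v) : Set (Sym2 V)) = G.incidenceSet v :=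
      Set.coe_toFinset _
    have hiso : ∀ x : V, ¬ (G.deleteEdges (G.incidenceSet v)).Adj v x := by
      intro x hx
      rw [SimpleGraph.deleteEdges_adj] at hx
      exact hx.2 ⟨(SimpleGraph.mem_edgeSet G).mpr hx.1, Sym2.mem_mk_left v x⟩
    obtain ⟨u, hu⟩ := Fintype.exists_ne_of_one_lt_card (by omega : 1 < Fintype.card V) v
    have hne : (G.deleteEdges (G.incidenceSet v)).connectedComponentMk v ≠
        (G.deleteEdges (G.incidenceSet v)).connectedComponentMk u := by
      intro hEq
      obtain ⟨p⟩ := SimpleGraph.ConnectedComponent.eq.mp hEq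
      cases p with
      | nil => exact hu rfl
      | cons h q => exact hiso _ h
    have h2le : numComp G + 1 ≤ numComp (G.deleteEdges ↑(G.incidenceFinset v)) := by
      rw [hc1, hcoe]
      have hnt : Nontrivial (G.deleteEdges (G.incidenceSet v)).ConnectedComponent :=
        ⟨_, _, hne.symm⟩
      have := Finite.one_lt_card_iff_nontrivial.mpr hnt
      rw [numComp]; omega
    obtain ⟨T, hTsub, hTeq⟩ := exists_split_subset G (G.incidenceFinset v) h2le
    have hTedge : ∀ e ∈ T, e ∈ G.edgeSet := by
      intro e heT
      exact ((SimpleGraph.mem_incidenceFinset _ _ _).mp (hTsub heT)).1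
    have hTsplit : IsSplit G T 2 := by
      refine ⟨fun e heT => hTedge e heT, ?_⟩
      rw [hTeq, hc1]
    have h1 := hsplit T hTsplit
    refine le_trans h1 ?_
    refine Finset.sum_le_sum_of_subset_of_nonneg hTsub ?_
    intro e heS _
    exact (hw e ((SimpleGraph.mem_incidenceFinset _ _ _).mp heS).1).le
  -- at least one edge
  have hEne : G.edgeFinset.Nonempty := by
    obtain ⟨u, hu⟩ := Fintype.exists_ne_of_one_lt_card (by omega : 1 < Fintype.card V)
      (Classical.arbitrary V)
    obtain ⟨p⟩ := hconn.preconnected u (Classical.arbitrary V)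
    cases p with
    | nil => exact absurd rfl hu
    | cons h q =>
        exact ⟨_, by rw [SimpleGraph.mem_edgeFinset, SimpleGraph.mem_edgeSet]; exact h⟩
  have hEpos : (0 : ℝ) < (G.edgeFinset.card : ℝ) := by
    exact_mod_cast Finset.card_pos.mpr hEne
  have hdegsum : ∑ v : V, (G.degree v : ℝ) = 2 * (G.edgeFinset.card : ℝ) := by
    rw [← Nat.cast_sum, G.sum_degrees_eq_twice_card_edges]; push_cast; ring
  -- high-degree vertices
  set A := Finset.univ \ B with hA
  have hcard : (A.card : ℝ) + (B.card : ℝ) = n := by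
    have h1 : A.card = Fintype.card V - B.card := by
      rw [hA, Finset.card_sdiff_of_subset (Finset.subset_univ B), Finset.card_univ]
    have h2 : B.card ≤ Fintype.card V := Finset.card_le_univ B
    rw [hndef]
    have : A.card + B.card = Fintype.card V := by omega
    exact_mod_cast this
  have hdA : ∀ v ∈ A, d ≤ (G.degree v : ℝ) := by
    intro v hv
    rw [hA, Finset.mem_sdiff] at hv
    have h2 := hv.2
    rw [hB] at h2
    simp only [Finset.mem_filter, Finset.mem_univ, true_and, not_lt] at h2
    exact h2
  have hAsum : (A.card : ℝ) * d ≤ 2 * (G.edgeFinset.card : ℝ) := by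
    calc (A.card : ℝ) * d ≤ ∑ v ∈ A, (G.degree v : ℝ) := by
          have := Finset.card_nsmul_le_sum A (fun v => (G.degree v : ℝ)) d hdA
          simpa [nsmul_eq_mul] using this
      _ ≤ ∑ v : V, (G.degree v : ℝ) :=
          Finset.sum_le_sum_of_subset_of_nonneg (Finset.subset_univ A)
            (by intro v _ _; positivity)
      _ = 2 * (G.edgeFinset.card : ℝ) := hdegsum
  have hAle : 2 * (1 + δ) * (A.card : ℝ) ≤ δ * n := by
    have hδ' : δ ≠ 0 := ne_of_gt hδ
    have hn0 : n ≠ 0 := ne_of_gt npos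
    have hbeta : beta G = (G.edgeFinset.card : ℝ) / n := by rw [hndef]; rfl
    rw [hd, hbeta] at hAsum
    set E : ℝ := (G.edgeFinset.card : ℝ) with hEdef
    have key : (A.card : ℝ) * (4 * E * (1 + δ)) ≤ 2 * E * (n * δ) := by
      have h := mul_le_mul_of_nonneg_right hAsum (le_of_lt (mul_pos npos hδ))
      calc (A.card : ℝ) * (4 * E * (1 + δ))
          = (A.card : ℝ) * (4 * (E / n) * (1 + δ) / δ) * (n * δ) := by
            field_simp
        _ ≤ 2 * E * (n * δ) := h
    nlinarith [key, hEpos, mul_pos hEpos hδ]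
  -- counting
  set EBB := G.edgeFinset.filter (fun e => ∀ v ∈ e, v ∈ B) with hEBB
  have hswap : ∑ v ∈ B, weight w (G.incidenceFinset v)
      = ∑ e ∈ G.edgeFinset, ((B.filter (fun v => v ∈ e)).card : ℝ) * w e := by
    calc ∑ v ∈ B, weight w (G.incidenceFinset v)
        = ∑ v ∈ B, ∑ e ∈ G.edgeFinset, (if v ∈ e then w e else 0) := by
          refine Finset.sum_congr rfl fun v _ => ?_
          rw [weight, G.incidenceFinset_eq_filter, Finset.sum_filter]
      _ = ∑ e ∈ G.edgeFinset, ∑ v ∈ B, (if v ∈ e then w e else 0) := Finset.sum_comm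
      _ = ∑ e ∈ G.edgeFinset, ((B.filter (fun v => v ∈ e)).card : ℝ) * w e := by
          refine Finset.sum_congr rfl fun e _ => ?_
          rw [← Finset.sum_filter, Finset.sum_const, nsmul_eq_mul]
  have hper : ∀ a b : V, s(a, b) ∈ G.edgeFinset →
      ((B.filter (fun v => v ∈ s(a, b))).card : ℝ) * w s(a, b)
        ≤ w s(a, b) + (if ∀ x ∈ s(a, b), x ∈ B then w s(a, b) else 0) := by
    intro a b he
    have hwe : 0 < w s(a, b) := hw _ (SimpleGraph.mem_edgeFinset.mp he)
    by_cases hall : ∀ x ∈ s(a, b), x ∈ B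
    · rw [if_pos hall]
      have hsub : B.filter (fun v => v ∈ s(a, b)) ⊆ {a, b} := by
        intro v hv
        rw [Finset.mem_filter] at hv
        rcases Sym2.mem_iff.mp hv.2 with rfl | rfl
        · exact Finset.mem_insert_self _ _
        · exact Finset.mem_insert_of_mem (Finset.mem_singleton_self _)
      have hcard2 : (B.filter (fun v => v ∈ s(a, b))).card ≤ 2 := by
        refine (Finset.card_le_card hsub).trans ?_
        exact (Finset.card_insert_le _ _).trans (by simp)
      calc ((B.filter (fun v => v ∈ s(a, b))).card : ℝ) * w s(a, b)
          ≤ 2 * w s(a, b) := by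
            apply mul_le_mul_of_nonneg_right _ hwe.le
            exact_mod_cast hcard2
        _ = w s(a, b) + w s(a, b) := by ring
    · rw [if_neg hall]
      push_neg at hall
      obtain ⟨x, hxe, hxB⟩ := hall
      have hcard1 : (B.filter (fun v => v ∈ s(a, b))).card ≤ 1 := by
        rcases Sym2.mem_iff.mp hxe with rfl | rfl
        · refine Finset.card_le_one.mpr ?_
          intro u hu u' hu'
          rw [Finset.mem_filter] at hu hu'
          rcases Sym2.mem_iff.mp hu.2 with rfl | rfl
          · exact absurd hu.1 hxB
          · rcases Sym2.mem_iff.mp hu'.2 with rfl | rfl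
            · exact absurd hu'.1 hxB
            · rfl
        · refine Finset.card_le_one.mpr ?_
          intro u hu u' hu'
          rw [Finset.mem_filter] at hu hu'
          rcases Sym2.mem_iff.mp hu.2 with rfl | rfl
          · rcases Sym2.mem_iff.mp hu'.2 with rfl | rfl
            · rfl
            · exact absurd hu'.1 hxB
          · exact absurd hu.1 hxB
      calc ((B.filter (fun v => v ∈ s(a, b))).card : ℝ) * w s(a, b)
          ≤ 1 * w s(a, b) := by
            apply mul_le_mul_of_nonneg_right _ hwe.le
            exact_mod_cast hcard1
        _ = w s(a, b) + 0 := by ring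
  have hmain : ∑ v ∈ B, weight w (G.incidenceFinset v) ≤ 1 + weight w EBB := by
    rw [hswap]
    calc ∑ e ∈ G.edgeFinset, ((B.filter (fun v => v ∈ e)).card : ℝ) * w e
        ≤ ∑ e ∈ G.edgeFinset, (w e + (if ∀ x ∈ e, x ∈ B then w e else 0)) := by
          refine Finset.sum_le_sum ?_
          intro e
          induction e using Sym2.ind with
          | _ a b => exact fun he => hper a b he
      _ = weight w G.edgeFinset
            + ∑ e ∈ G.edgeFinset, (if ∀ x ∈ e, x ∈ B then w e else 0) := by
          rw [Finset.sum_add_distrib]; rfl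
      _ = 1 + weight w EBB := by
          rw [hnorm, ← Finset.sum_filter]; rfl
  have hlow : (B.card : ℝ) * ((1 + δ) / n) ≤ ∑ v ∈ B, weight w (G.incidenceFinset v) := by
    have := Finset.card_nsmul_le_sum B (fun v => weight w (G.incidenceFinset v))
      ((1 + δ) / n) (fun v _ => hstar v)
    simpa [nsmul_eq_mul] using this
  have hfinal : (B.card : ℝ) * (1 + δ) ≤ (1 + weight w EBB) * n := by
    have h := hlow.trans hmain
    rw [mul_div_assoc'] at h
    exact (div_le_iff₀ npos).mp h
  nlinarith [hfinal, hAle, hcard, npos, hδ, mul_pos npos hδ]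

end KCut
end

section
/- Let d ≥ 1 be an integer and let G be a weighted graph in which every vertex has degree at most d. Then G contains a matching M with total weight w(M) ≥ w(E)/(2d − 1), where E is the edge set of G. -/
open Finset

namespace KCut

open scoped Classical

lemma greedy
    {V : Type*} [Fintype V] [DecidableEq V]
    (G : SimpleGraph V) [DecidableRel G.Adj]
    (w : Sym2 V → ℝ) (hw : ∀ e ∈ G.edgeSet, 0 < w e)
    (d : ℕ) (hd : 1 ≤ d)
    (hdeg : ∀ v : V, G.degree v ≤ d) :
    ∀ E : Finset (Sym2 V), ↑E ⊆ G.edgeSet →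
      ∃ M : Finset (Sym2 V), M ⊆ E ∧
        (∀ e ∈ M, ∀ f ∈ M, e ≠ f → ∀ v : V, v ∈ e → v ∉ f) ∧
        weight w E ≤ (2 * (d : ℝ) - 1) * weight w M := by
  intro E
  induction E using Finset.strongInduction with
  | _ E ih =>
  intro hE
  rcases E.eq_empty_or_nonempty with rfl | hne
  · exact ⟨∅, Finset.Subset.refl _, by simp, by simp [weight]⟩
  obtain ⟨e, heE, hemax⟩ := E.exists_max_image w hne
  obtain ⟨⟨a, b⟩, rfl⟩ := e.exists_rep
  have heG : s(a, b) ∈ G.edgeSet := hE heE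
  set R : Finset (Sym2 V) := E.filter (fun f => ∃ v : V, v ∈ f ∧ v ∈ s(a, b)) with hR
  have heR : s(a, b) ∈ R := by
    refine Finset.mem_filter.mpr ⟨heE, ⟨a, ?_, ?_⟩⟩ <;> simp
  have hRsub : R ⊆ G.incidenceFinset a ∪ G.incidenceFinset b := by
    intro f hf
    rw [Finset.mem_filter] at hf
    obtain ⟨hfE, v, hvf, hve⟩ := hf
    rw [Sym2.mem_iff] at hve
    rcases hve with rfl | rfl
    · exact Finset.mem_union_left _ (by
        rw [SimpleGraph.mem_incidenceFinset]; exact ⟨hE hfE, hvf⟩)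
    · exact Finset.mem_union_right _ (by
        rw [SimpleGraph.mem_incidenceFinset]; exact ⟨hE hfE, hvf⟩)
  have hRcard : (R.card : ℝ) ≤ 2 * (d : ℝ) - 1 := by
    have h1 : R.card + 1 ≤ 2 * d := by
      have hinter : 1 ≤ ((G.incidenceFinset a) ∩ (G.incidenceFinset b)).card := by
        apply Finset.card_pos.mpr
        refine ⟨s(a, b), Finset.mem_inter.mpr ⟨?_, ?_⟩⟩ <;>
          rw [SimpleGraph.mem_incidenceFinset] <;> exact ⟨heG, by simp⟩
      have h2 := Finset.card_union_add_card_inter (G.incidenceFinset a) (G.incidenceFinset b)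
      have h3 : R.card ≤ (G.incidenceFinset a ∪ G.incidenceFinset b).card :=
        Finset.card_le_card hRsub
      have h4 : (G.incidenceFinset a).card = G.degree a :=
        G.card_incidenceFinset_eq_degree a
      have h5 : (G.incidenceFinset b).card = G.degree b :=
        G.card_incidenceFinset_eq_degree b
      have := hdeg a
      have := hdeg b
      omega
    have : (R.card : ℝ) + 1 ≤ 2 * d := by exact_mod_cast h1
    linarith
  have hwe : 0 ≤ w s(a, b) := (hw _ heG).le
  have hRw : weight w R ≤ (2 * (d : ℝ) - 1) * w s(a, b) := by
    have : weight w R ≤ R.card • w s(a, b) :=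
      Finset.sum_le_card_nsmul R w _ (fun f hf => hemax f (Finset.mem_filter.mp hf).1)
    calc weight w R ≤ R.card • w s(a, b) := this
      _ = (R.card : ℝ) * w s(a, b) := by simp [nsmul_eq_mul]
      _ ≤ (2 * (d : ℝ) - 1) * w s(a, b) := by
          apply mul_le_mul_of_nonneg_right hRcard hwe
  -- induction on E \ R
  have hssub : E \ R ⊂ E := by
    apply Finset.sdiff_ssubset (Finset.filter_subset _ _) ⟨_, heR⟩
  obtain ⟨M', hM'sub, hM'match, hM'w⟩ := ih (E \ R) hssub
    ((Finset.coe_subset.mpr ((Finset.sdiff_subset).trans (le_refl E))).trans hE)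
  refine ⟨insert s(a, b) M', ?_, ?_, ?_⟩
  · exact Finset.insert_subset heE (hM'sub.trans Finset.sdiff_subset)
  · intro x hx y hy hxy v hvx
    have key : ∀ f ∈ M', ∀ v : V, v ∈ f → v ∉ s(a, b) := by
      intro f hf v hvf hve
      have := hM'sub hf
      rw [Finset.mem_sdiff] at this
      exact this.2 (Finset.mem_filter.mpr ⟨this.1, ⟨v, hvf, hve⟩⟩)
    rw [Finset.mem_insert] at hx hy
    rcases hx with rfl | hx <;> rcases hy with rfl | hy
    · exact absurd rfl hxy
    · intro hvy; exact key y hy v hvy hvx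
    · exact key x hx v hvx
    · exact hM'match x hx y hy hxy v hvx
  · have heM' : s(a, b) ∉ M' := fun h => (Finset.mem_sdiff.mp (hM'sub h)).2 heR
    have split : weight w (E \ R) + weight w R = weight w E :=
      Finset.sum_sdiff (f := w) (Finset.filter_subset _ _)
    have hins : weight w (insert s(a, b) M') = w s(a, b) + weight w M' :=
      Finset.sum_insert heM'
    rw [← split, hins, mul_add]
    have := add_le_add hM'w hRw
    linarith


theorem matching_weight_of_bounded_degree
    {V : Type*} [Fintype V] [DecidableEq V]
    (G : SimpleGraph V) [DecidableRel G.Adj]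
    (w : Sym2 V → ℝ) (hw : ∀ e ∈ G.edgeSet, 0 < w e)
    (d : ℕ) (hd : 1 ≤ d)
    (hdeg : ∀ v : V, G.degree v ≤ d) :
    ∃ M : Finset (Sym2 V), IsMatchingSet G M ∧
      weight w G.edgeFinset / (2 * (d : ℝ) - 1) ≤ weight w M := by
  obtain ⟨M, hMsub, hMmatch, hMw⟩ :=
    greedy G w hw d hd hdeg G.edgeFinset (by simp)
  refine ⟨M, ⟨?_, hMmatch⟩, ?_⟩
  · exact (Finset.coe_subset.mpr hMsub).trans (by simp)
  · have hpos : (0 : ℝ) < 2 * (d : ℝ) - 1 := by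
      have : (1 : ℝ) ≤ (d : ℝ) := by exact_mod_cast hd
      linarith
    rw [div_le_iff₀ hpos, mul_comm]
    exact hMw

end KCut
end

section
/- Let ε > 0 and let G be a normalized weighted graph on k ≥ 2 vertices such that for every vertex v the total weight of the edges incident to v is at least (2 − ε)/k. Let M be a matching in G with total weight w(M) ≥ ε. Then there exists an edge {a, b} ∈ M such that the total weight of the set of edges incident to a or to b is at most 2(2 − ε)/k. -/
open Finset

namespace KCut

open scoped Classical

theorem exists_light_matching_edge
    {V : Type*} [Fintype V] [DecidableEq V]
    (G : SimpleGraph V) [DecidableRel G.Adj]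
    (w : Sym2 V → ℝ) (hw : ∀ e ∈ G.edgeSet, 0 < w e)
    (hnorm : weight w G.edgeFinset = 1)
    (hk : 2 ≤ Fintype.card V)
    (ε : ℝ) (hε : 0 < ε)
    (hdeg : ∀ v : V,
      (2 - ε) / (Fintype.card V : ℝ) ≤ weight w (G.edgeFinset.filter (fun e => v ∈ e)))
    (M : Finset (Sym2 V)) (hM : IsMatchingSet G M) (hMw : ε ≤ weight w M) :
    ∃ a b : V, s(a, b) ∈ M ∧
      weight w (G.edgeFinset.filter (fun f => a ∈ f ∨ b ∈ f)) ≤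
        2 * (2 - ε) / (Fintype.card V : ℝ) := by
  classical
  obtain ⟨hME, hMdisj⟩ := hM
  set k : ℝ := (Fintype.card V : ℝ) with hkdef
  have hk0 : (0:ℝ) < k := by
    have h : (0:ℕ) < Fintype.card V := by omega
    rw [hkdef]; exact_mod_cast h
  set E := G.edgeFinset with hE
  set d : V → ℝ := fun v => weight w (E.filter (fun e => v ∈ e)) with hd
  set S : Sym2 V → ℝ := fun e => weight w (E.filter (fun g => ∃ v ∈ e, v ∈ g)) with hS
  set Ve : Sym2 V → Finset V := fun e => univ.filter (fun v => v ∈ e) with hVe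
  have hpred : ∀ (a b : V) (g : Sym2 V), (∃ v ∈ s(a,b), v ∈ g) ↔ (a ∈ g ∨ b ∈ g) := by
    intro a b g
    constructor
    · rintro ⟨v, hv, hvg⟩
      rcases Sym2.mem_iff.mp hv with rfl | rfl
      · exact Or.inl hvg
      · exact Or.inr hvg
    · rintro (h | h)
      exacts [⟨a, by simp, h⟩, ⟨b, by simp, h⟩]
  have hcard2 : ∀ e ∈ E, (Ve e).card = 2 := by
    intro e he
    induction e using Sym2.ind with
    | _ a b =>
      have hab : G.Adj a b := by
        rwa [hE, SimpleGraph.mem_edgeFinset, SimpleGraph.mem_edgeSet] at he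
      have hVab : Ve s(a,b) = {a, b} := by
        ext v; simp [hVe, Sym2.mem_iff]
      rw [hVab, card_insert_of_notMem (by simp [hab.ne]), card_singleton]
  have hsumd : ∑ v, d v = 2 := by
    have h1 : ∑ v, d v = ∑ e ∈ E, ((Ve e).card : ℝ) * w e := by
      simp only [hd, weight, sum_filter]
      rw [Finset.sum_comm]
      refine Finset.sum_congr rfl (fun e _ => ?_)
      rw [← Finset.sum_filter]
      simp [hVe, mul_comm]
    rw [h1, Finset.sum_congr rfl (fun e he => by rw [hcard2 e he]), ← Finset.mul_sum]
    have h2 : ∑ e ∈ E, w e = 1 := hnorm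
    rw [h2]; norm_num
  have hperedge : ∀ e ∈ M, S e = (∑ v ∈ Ve e, d v) - w e := by
    intro e heM
    have heE : e ∈ E := by
      rw [hE, SimpleGraph.mem_edgeFinset]; exact hME heM
    induction e using Sym2.ind with
    | _ a b =>
      have hab : G.Adj a b := by
        rwa [hE, SimpleGraph.mem_edgeFinset, SimpleGraph.mem_edgeSet] at heE
      have hne : a ≠ b := hab.ne
      have hVab : Ve s(a,b) = {a, b} := by
        ext v; simp [hVe, Sym2.mem_iff]
      have hfilt : E.filter (fun g => ∃ v ∈ s(a,b), v ∈ g)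
          = E.filter (fun g => a ∈ g) ∪ E.filter (fun g => b ∈ g) := by
        rw [Finset.filter_congr (fun g _ => hpred a b g), Finset.filter_or]
      have hinter : E.filter (fun g => a ∈ g) ∩ E.filter (fun g => b ∈ g) = {s(a,b)} := by
        ext g
        simp only [Finset.mem_inter, Finset.mem_filter, Finset.mem_singleton]
        constructor
        · rintro ⟨⟨hgE, hag⟩, ⟨_, hbg⟩⟩
          exact Sym2.eq_of_ne_mem hne hag hbg (Sym2.mem_mk_left a b) (Sym2.mem_mk_right a b)
        · rintro rfl
          exact ⟨⟨heE, by simp⟩, heE, by simp⟩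
      have hsum := Finset.sum_union_inter (s₁ := E.filter (fun g => a ∈ g))
        (s₂ := E.filter (fun g => b ∈ g)) (f := w)
      rw [hinter, Finset.sum_singleton] at hsum
      simp only [hS, weight, hfilt, hVab]
      rw [Finset.sum_pair hne]
      simp only [hd, weight]
      linarith [hsum]
  have hdisj : (M : Set (Sym2 V)).PairwiseDisjoint Ve := by
    intro e he f hf hef
    simp only [Function.onFun]
    rw [Finset.disjoint_left]
    intro v hv hv'
    simp only [hVe, Finset.mem_filter] at hv hv'
    exact hMdisj e he f hf hef v hv.2 hv'.2
  set T : Finset V := M.biUnion Ve with hT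
  have hTcardN : T.card = 2 * M.card := by
    rw [hT, Finset.card_biUnion (fun e he f hf hef => hdisj he hf hef)]
    rw [Finset.sum_congr rfl (fun e he => hcard2 e (by
      rw [hE, SimpleGraph.mem_edgeFinset]; exact hME he))]
    rw [Finset.sum_const, smul_eq_mul, Nat.mul_comm]
  have hTcard : (T.card : ℝ) = 2 * M.card := by exact_mod_cast congrArg (Nat.cast : ℕ → ℝ) hTcardN
  have hsumT : ∑ v ∈ T, d v = ∑ e ∈ M, ∑ v ∈ Ve e, d v :=
    Finset.sum_biUnion (fun e he f hf hef => hdisj he hf hef)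
  have hcompl : ((Tᶜ).card : ℝ) = k - T.card := by
    rw [Finset.card_compl, Nat.cast_sub (Finset.card_le_univ T), hkdef]
  have hcomp : (k - T.card) * ((2 - ε) / k) ≤ ∑ v ∈ Tᶜ, d v := by
    have hmem : ∀ v ∈ Tᶜ, (2 - ε) / k ≤ d v := fun v _ => hdeg v
    have h := Finset.card_nsmul_le_sum Tᶜ d ((2 - ε) / k) hmem
    rw [nsmul_eq_mul, hcompl] at h
    linarith
  have hsplit : ∑ v ∈ T, d v + ∑ v ∈ Tᶜ, d v = 2 := by
    rw [Finset.sum_add_sum_compl, hsumd]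
  have hεle1 : ε ≤ 1 := by
    have hwM : weight w M ≤ weight w E := by
      refine Finset.sum_le_sum_of_subset_of_nonneg ?_ (fun e he _ => (hw e (by
        rw [hE, SimpleGraph.mem_edgeFinset] at he; exact he)).le)
      intro e he
      rw [hE, SimpleGraph.mem_edgeFinset]; exact hME he
    linarith [hnorm, hMw]
  have hmain : ∑ e ∈ M, S e ≤ ∑ e ∈ M, (2 * (2 - ε) / k) := by
    rw [Finset.sum_congr rfl hperedge, Finset.sum_sub_distrib, ← hsumT]
    rw [Finset.sum_const, nsmul_eq_mul]
    have h2 : ε ≤ ∑ e ∈ M, w e := hMw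
    have hTk : (T.card : ℝ) ≤ k := by
      rw [hkdef]; exact_mod_cast Finset.card_le_univ T
    have hexp : (k - T.card) * ((2 - ε) / k) = (2 - ε) - (T.card : ℝ) * (2 - ε) / k := by
      field_simp
    have h1 : ∑ v ∈ T, d v ≤ 2 - ((2 - ε) - (T.card : ℝ) * (2 - ε) / k) := by
      rw [← hexp]; linarith
    rw [hTcard] at h1
    have h3 : (M.card : ℝ) * (2 * (2 - ε) / k) = 2 * (M.card : ℝ) * (2 - ε) / k := by ring
    rw [h3]
    linarith
  have hMne : M.Nonempty := by
    rcases M.eq_empty_or_nonempty with h | h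
    · exfalso; rw [h] at hMw; simp [weight] at hMw; linarith
    · exact h
  obtain ⟨e, heM, hle⟩ := Finset.exists_le_of_sum_le hMne hmain
  induction e using Sym2.ind with
  | _ a b =>
    refine ⟨a, b, heM, ?_⟩
    have heq : E.filter (fun f => a ∈ f ∨ b ∈ f) = E.filter (fun g => ∃ v ∈ s(a,b), v ∈ g) :=
      Finset.filter_congr (fun g _ => (hpred a b g).symm)
    calc weight w (E.filter (fun f => a ∈ f ∨ b ∈ f)) = S s(a,b) := by rw [hS, heq]
      _ ≤ 2 * (2 - ε) / k := hle


end KCut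
end

section
/- Let G be a weighted graph, let S be a k-way split of G, and let a_1, a_2, …, a_l be positive integers with a_1 + a_2 + ⋯ + a_l < k. For each i = 1, …, l let G_i = G − (C_1 ∪ ⋯ ∪ C_{i−1}), let C_i be a minimum (a_i + 1)-way split of G_i, and suppose S_i = S ∖ (C_1 ∪ ⋯ ∪ C_{i−1}) is a b_i-way split of G_i. Let δ ≥ 0 and suppose that for every i, w(C_i)/a_i ≤ (1+δ)·w(S_i)/b_i, and that C_i is a sparse split of G_i for every i < l. Then the union C_1 ∪ ⋯ ∪ C_l is a (1 + a_1 + ⋯ + a_l)-way split of G whose density satisfies dens_G(C_1 ∪ ⋯ ∪ C_l) ≤ (1+δ)·w(S)/k. -/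
/-!
Induction on `l`: removing `C₁` leaves the same situation for `G − C₁`, `S ∖ C₁`, the splits
`C₂, …, C_l` and `b₂` in place of `k`, so it suffices to combine `C₁` with the union `T` of the
others. The number of components is submodular under edge deletion, hence `S ∩ C₁` is a split of
`G` of separation degree at least `k − b₂ + 1`, and the sparsity of `C₁` bounds `w(C₁)` by a
multiple of `w(S ∩ C₁)`. If `k · w(S ∩ C₁) ≥ (k − b₂) · w(S)`, the inductive bound already gives
`T` density at most `(1 + δ) w(S) / k`; below that threshold the bound on `w(C₁) + w(T)` is affine
in `w(S ∩ C₁)` and holds at both ends, by `b₂ ≥ k − a₁` and by `δ ≥ 0` respectively.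
-/

open Finset

namespace KCut

open scoped Classical

/-- The union of the splits `C j` for `j < i`. -/
def prevUnion {V : Type*} [DecidableEq V] {l : ℕ}
    (C : Fin l → Finset (Sym2 V)) (i : Fin l) : Finset (Sym2 V) :=
  (Finset.univ.filter (fun j => j < i)).biUnion C

open SimpleGraph

section Components

variable {V : Type*} {G H : SimpleGraph V} {x y : V}

lemma numComp_anti [Finite V] (h : H ≤ G) : numComp G ≤ numComp H :=
  ConnectedComponent.card_le_card_of_le h

lemma numComp_deleteEdges_singleton_le_of_not_isBridge [Finite V] (h : ¬G.IsBridge s(x, y)) :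
    numComp (G.deleteEdges {s(x, y)}) ≤ numComp G := by
  rw [isBridge_iff, not_not] at h
  refine Nat.card_le_card_of_injective (ConnectedComponent.map (Hom.ofLE (deleteEdges_le _)))
    (ConnectedComponent.ind₂ fun u v huv => ?_)
  simp only [ConnectedComponent.map_mk, Hom.ofLE_apply, ConnectedComponent.eq] at huv ⊢
  rw [reachable_iff_reflTransGen] at huv ⊢
  refine Relation.ReflTransGen.lift' id (fun a b hab => ?_) u v huv
  change Relation.ReflTransGen _ a b
  rw [← reachable_iff_reflTransGen]
  by_cases he : s(a, b) = s(x, y)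
  · rcases Sym2.eq_iff.1 he with ⟨rfl, rfl⟩ | ⟨rfl, rfl⟩
    exacts [h, h.symm]
  · exact Adj.reachable (by simpa [he] using hab)

lemma numComp_deleteEdges_singleton_le_succ [Finite V] :
    numComp (G.deleteEdges {s(x, y)}) ≤ numComp G + 1 := by
  classical
  set K := G.deleteEdges {s(x, y)}
  let f : K.ConnectedComponent → Option G.ConnectedComponent := fun c =>
    if c = K.connectedComponentMk y then none
    else some (c.map (Hom.ofLE (deleteEdges_le _)))
  rw [numComp, numComp, ← Finite.card_option]
  refine Nat.card_le_card_of_injective f (ConnectedComponent.ind₂ fun u v huv => ?_)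
  by_cases hu : K.connectedComponentMk u = K.connectedComponentMk y <;>
    by_cases hv : K.connectedComponentMk v = K.connectedComponentMk y <;>
    simp only [f, hu, hv, if_true, if_false, reduceCtorEq, Option.some.injEq,
      ConnectedComponent.eq] at huv ⊢
  rw [ConnectedComponent.map_mk, ConnectedComponent.map_mk, ConnectedComponent.eq] at huv
  rw [ConnectedComponent.eq] at hu hv
  -- a path between two vertices cut off from `y` cannot use the edge `s(x, y)`
  obtain ⟨p, hp⟩ := huv.exists_isPath
  exact reachable_deleteEdges_iff_exists_walk.2
    ⟨p, hp.isTrail.not_mem_edges_of_not_reachable hu hv⟩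

lemma numComp_lt_deleteEdges_singleton [Finite V] (hxy : G.Adj x y) (h : G.IsBridge s(x, y)) :
    numComp G < numComp (G.deleteEdges {s(x, y)}) := by
  have hsurj := ConnectedComponent.surjective_map_ofLE (deleteEdges_le (G := G) {s(x, y)})
  by_contra! hle
  have := (hsurj.bijective_of_nat_card_le hle).injective
    (a₁ := (G.deleteEdges {s(x, y)}).connectedComponentMk x)
    (a₂ := (G.deleteEdges {s(x, y)}).connectedComponentMk y)
  simp [ConnectedComponent.eq, hxy.reachable] at this
  exact h this

lemma numComp_deleteEdges_singleton_add_le [Finite V] (hle : H ≤ G) {e : Sym2 V}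
    (he : e ∈ H.edgeSet) :
    numComp (G.deleteEdges {e}) + numComp H ≤ numComp (H.deleteEdges {e}) + numComp G := by
  cases e with | h x y
  by_cases hG : G.IsBridge s(x, y)
  · have := numComp_lt_deleteEdges_singleton (x := x) (y := y) he (hG.anti hle)
    have := numComp_deleteEdges_singleton_le_succ (G := G) (x := x) (y := y)
    omega
  · have := numComp_deleteEdges_singleton_le_of_not_isBridge hG
    have := numComp_anti (deleteEdges_le (G := H) {s(x, y)})
    omega

lemma numComp_deleteEdges_add_le [Finite V] (hle : H ≤ G) {F : Finset (Sym2 V)}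
    (hF : ↑F ⊆ H.edgeSet) :
    numComp (G.deleteEdges F) + numComp H ≤ numComp (H.deleteEdges F) + numComp G := by
  induction F using Finset.induction with
  | empty => simp [Nat.add_comm]
  | @insert e F heF ih =>
    rw [Finset.coe_insert, Set.insert_subset_iff] at hF
    have he : e ∈ (H.deleteEdges F).edgeSet := by
      rw [edgeSet_deleteEdges]
      exact ⟨hF.1, heF⟩
    have := numComp_deleteEdges_singleton_add_le (deleteEdges_mono (s := F) hle) he
    rw [deleteEdges_deleteEdges, deleteEdges_deleteEdges, Set.union_singleton] at this
    have := ih hF.2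
    rw [Finset.coe_insert]
    omega

theorem numComp_deleteEdges_submodular [Finite V] [DecidableEq V] {A B : Finset (Sym2 V)}
    (hB : ↑B ⊆ G.edgeSet) :
    numComp (G.deleteEdges A) + numComp (G.deleteEdges B) ≤
      numComp (G.deleteEdges ↑(A ∪ B)) + numComp (G.deleteEdges ↑(A ∩ B)) := by
  have hF : ↑(B \ A) ⊆ (G.deleteEdges A).edgeSet := by
    rw [edgeSet_deleteEdges, Finset.coe_sdiff]
    exact Set.sdiff_subset_sdiff_left hB
  have := numComp_deleteEdges_add_le
    (deleteEdges_anti (G := G) (Finset.coe_subset.2 (Finset.inter_subset_left (s₂ := B)))) hF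
  have hB' : A ∩ B ∪ B \ A = B := by
    rw [Finset.inter_comm, Finset.union_comm, Finset.sdiff_union_inter]
  rwa [deleteEdges_deleteEdges, deleteEdges_deleteEdges, ← Finset.coe_union, ← Finset.coe_union,
    Finset.union_sdiff_self_eq_union, hB', add_comm] at this

end Components

section Splits

variable {V : Type*} {G : SimpleGraph V} {w : Sym2 V → ℝ} {S C R T : Finset (Sym2 V)}

lemma deleteEdges_deleteEdges_sdiff [DecidableEq V] (G : SimpleGraph V) (C S : Finset (Sym2 V)) :
    (G.deleteEdges ↑C).deleteEdges ↑(S \ C) = G.deleteEdges ↑(S ∪ C) := by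
  rw [deleteEdges_deleteEdges, ← Finset.coe_union, Finset.union_sdiff_self_eq_union,
    Finset.union_comm]

lemma IsSplit.eq_of_one_lt {k k' : ℕ} (h : IsSplit G S k) (h' : IsSplit G S k') (hk : 1 < k) :
    k' = k := by
  have := h.2
  have := h'.2
  omega

lemma IsSplit.union [DecidableEq V] {a m : ℕ} (hC : IsSplit G C (a + 1))
    (hT : IsSplit (G.deleteEdges C) T (m + 1)) : IsSplit G (C ∪ T) (a + m + 1) := by
  refine ⟨?_, ?_⟩
  · rw [Finset.coe_union]
    exact Set.union_subset hC.1 (hT.1.trans (edgeSet_mono (deleteEdges_le _)))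
  · rw [Finset.coe_union, ← deleteEdges_deleteEdges, hT.2, hC.2]
    omega

lemma isSplit_of_subset [Finite V] (hR : ↑R ⊆ G.edgeSet) :
    IsSplit G R (numComp (G.deleteEdges R) - numComp G + 1) := by
  have := numComp_anti (deleteEdges_le (G := G) R)
  exact ⟨hR, by omega⟩

lemma IsSplit.le_of_subset [Finite V] {d a : ℕ} (hR : IsSplit G R (d + 1))
    (hC : IsSplit G C (a + 1)) (hRC : R ⊆ C) : d ≤ a := by
  have := numComp_anti (deleteEdges_anti (G := G) (Finset.coe_subset.2 hRC))
  have := hR.2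
  have := hC.2
  omega

lemma IsSplit.sub_one_le_sdiff_add [Finite V] [DecidableEq V] {k a b : ℕ} (hS : IsSplit G S k)
    (hC : IsSplit G C (a + 1)) (hSC : IsSplit (G.deleteEdges C) (S \ C) b) :
    k - 1 ≤ b - 1 + a := by
  have := numComp_anti (deleteEdges_anti (G := G)
    (Finset.coe_subset.2 (Finset.subset_union_left (s₁ := S) (s₂ := C))))
  have hSC2 := hSC.2
  rw [deleteEdges_deleteEdges_sdiff] at hSC2
  have := hS.2
  have := hC.2
  omega

lemma IsSplit.sub_one_le_sdiff_add_inter [Finite V] [DecidableEq V] {k a b d : ℕ}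
    (hS : IsSplit G S k) (hC : IsSplit G C (a + 1)) (hSC : IsSplit (G.deleteEdges C) (S \ C) b)
    (hR : IsSplit G (S ∩ C) (d + 1)) : k - 1 ≤ b - 1 + d := by
  have := numComp_deleteEdges_submodular (A := S) hC.1
  have hSC2 := hSC.2
  rw [deleteEdges_deleteEdges_sdiff] at hSC2
  have := hS.2
  have := hC.2
  have := hR.2
  omega

lemma weight_nonneg (hw : ∀ e ∈ G.edgeSet, 0 ≤ w e) (hS : ↑S ⊆ G.edgeSet) : 0 ≤ weight w S :=
  Finset.sum_nonneg fun e he => hw e (hS he)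

lemma weight_union_of_isSplit_deleteEdges [DecidableEq V] {m : ℕ}
    (hT : IsSplit (G.deleteEdges C) T m) : weight w (C ∪ T) = weight w C + weight w T := by
  refine Finset.sum_union (Finset.disjoint_right.2 fun e he heC => ?_)
  have := hT.1 he
  rw [edgeSet_deleteEdges] at this
  exact this.2 heC

end Splits

lemma combined_density_le {D a m k b r W X Y : ℝ} (hD : 1 ≤ D) (ha : 0 < a) (hm : 0 < m)
    (hk : a + m < k) (hb : k - a ≤ b) (hr : 0 ≤ r) (hrW : r ≤ W)
    (hX : X / a ≤ D * W / k) (hXr : 0 < k - b → X * (k - b) ≤ a * r)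
    (hY : Y / m ≤ D * (W - r) / b) :
    (X + Y) / (a + m) ≤ D * W / k := by
  have hk0 : 0 < k := by linarith
  have hb0 : 0 < b := by linarith
  rw [div_le_div_iff₀ ha hk0] at hX
  rw [div_le_div_iff₀ hm hb0] at hY
  rw [div_le_div_iff₀ (by linarith) hk0]
  rcases le_or_gt ((k - b) * W) (k * r) with hcase | hcase
  · have : Y * k * b ≤ D * W * m * b := by
      nlinarith [mul_le_mul_of_nonneg_right hY hk0.le,
        mul_le_mul_of_nonneg_left hcase (by positivity : 0 ≤ D * m)]
    have : Y * k ≤ D * W * m := le_of_mul_le_mul_right this hb0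
    linarith
  · have hkb : 0 < k - b := by nlinarith
    have hXr := hXr hkb
    -- `E` is affine in `r`, nonnegative at `r = 0` and at `r = (k - b) W / k`
    set E := (k - b) * b * D * W * (a + m) - b * k * a * r - (k - b) * k * D * m * (W - r)
    have hE0 : 0 ≤ D * W * (k - b) * ((a + m) * b - k * m) := by
      have : 0 ≤ (a + m) * b - k * m := by nlinarith
      have : 0 ≤ W := hr.trans hrW
      positivity
    have hE1 : 0 ≤ k * r * ((k - b) * W * b * a * (D - 1)) := by
      have : 0 ≤ D - 1 := by linarith
      have : 0 ≤ k - b := hkb.le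
      have : 0 ≤ W := hr.trans hrW
      positivity
    have hE : 0 ≤ E := by
      have h : (k - b) * W * E = ((k - b) * W - k * r) * (D * W * (k - b) * ((a + m) * b - k * m))
          + k * r * ((k - b) * W * b * a * (D - 1)) := by ring
      have hpos : 0 < (k - b) * W := by nlinarith
      refine nonneg_of_mul_nonneg_right ?_ hpos
      rw [h]
      nlinarith
    have : (X + Y) * k * ((k - b) * b) ≤ D * W * (a + m) * ((k - b) * b) := by
      nlinarith [mul_le_mul_of_nonneg_right hXr (by positivity : 0 ≤ b * k),
        mul_le_mul_of_nonneg_right hY (by positivity : 0 ≤ (k - b) * k)]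
    exact le_of_mul_le_mul_right this (by positivity)

theorem IsSparse.density_union_le {V : Type*} [Finite V] [DecidableEq V] {G : SimpleGraph V}
    {w : Sym2 V → ℝ} (hw : ∀ e ∈ G.edgeSet, 0 ≤ w e) {D : ℝ} (hD : 1 ≤ D)
    {S C T : Finset (Sym2 V)} {k a m b : ℕ} (ha : 1 ≤ a) (hm : 1 ≤ m) (hk : a + m < k)
    (hS : IsSplit G S k) (hC : IsSplit G C (a + 1)) (hCs : IsSparse G w C (a + 1))
    (hSC : IsSplit (G.deleteEdges C) (S \ C) b) (hT : IsSplit (G.deleteEdges C) T (m + 1))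
    (hCdens : weight w C / a ≤ D * weight w S / k)
    (hTdens : density w T (m + 1) ≤ D * weight w (S \ C) / b) :
    density w (C ∪ T) (a + m + 1) ≤ D * weight w S / k := by
  have hR := isSplit_of_subset (G := G) (R := S ∩ C)
    ((Finset.coe_subset.2 Finset.inter_subset_right).trans hC.1)
  set d := numComp (G.deleteEdges ↑(S ∩ C)) - numComp G
  have hkbd := hS.sub_one_le_sdiff_add_inter hC hSC hR
  have hda := hR.le_of_subset hC Finset.inter_subset_right
  have hX := weight_nonneg hw hC.1
  have hXr : 0 < (k : ℝ) - b → weight w C * (k - b) ≤ a * weight w (S ∩ C) := by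
    intro hbk
    have hbk : b < k := by exact_mod_cast sub_pos.1 hbk
    have hsparse := hCs (d + 1) (by omega) (by omega) _ hR
    simp only [density, Nat.cast_add, Nat.cast_one, add_sub_cancel_right] at hsparse
    rw [div_le_div_iff₀ (by positivity) (by norm_cast; omega)] at hsparse
    have : (k : ℝ) - b ≤ d := by
      rw [sub_le_iff_le_add]
      exact_mod_cast (by omega : k ≤ d + b)
    nlinarith
  have hW : weight w S = weight w (S ∩ C) + weight w (S \ C) :=
    (Finset.sum_inter_add_sum_sdiff S C w).symm
  have hr := weight_nonneg hw hR.1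
  have := weight_nonneg (S := S \ C) hw ((Finset.coe_subset.2 Finset.sdiff_subset).trans hS.1)
  simp only [density, weight_union_of_isSplit_deleteEdges hT, Nat.cast_add, Nat.cast_one,
    add_sub_cancel_right] at hTdens ⊢
  refine combined_density_le hD (by positivity) (by positivity) (by exact_mod_cast hk)
    ?_ hr (by linarith) hCdens hXr (by rwa [hW, add_sub_cancel_left])
  rw [sub_le_iff_le_add]
  exact_mod_cast (by omega : k ≤ b + a)

section PrevUnion

variable {V : Type*} [DecidableEq V] {l : ℕ} (C : Fin (l + 1) → Finset (Sym2 V))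

@[simp]
lemma prevUnion_zero : prevUnion C 0 = ∅ := by
  simp [prevUnion]

lemma prevUnion_succ (i : Fin l) : prevUnion C i.succ = C 0 ∪ prevUnion (Fin.tail C) i := by
  ext e
  simp [prevUnion, Fin.exists_fin_succ, Fin.succ_pos, Fin.tail]

lemma biUnion_univ_fin_succ : univ.biUnion C = C 0 ∪ univ.biUnion (Fin.tail C) := by
  ext e
  simp [Fin.exists_fin_succ, Fin.tail]

lemma deleteEdges_prevUnion_succ (G : SimpleGraph V) (i : Fin l) :
    G.deleteEdges ↑(prevUnion C i.succ) =
      (G.deleteEdges ↑(C 0)).deleteEdges ↑(prevUnion (Fin.tail C) i) := by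
  rw [deleteEdges_deleteEdges, ← Finset.coe_union, prevUnion_succ]

lemma sdiff_prevUnion_succ (S : Finset (Sym2 V)) (i : Fin l) :
    S \ prevUnion C i.succ = (S \ C 0) \ prevUnion (Fin.tail C) i := by
  rw [prevUnion_succ]
  exact sdiff_sdiff_left.symm

end PrevUnion

theorem isSplit_biUnion {V : Type*} [DecidableEq V] {G : SimpleGraph V} {l : ℕ} {a : Fin l → ℕ}
    {C : Fin l → Finset (Sym2 V)}
    (hC : ∀ i, IsSplit (G.deleteEdges ↑(prevUnion C i)) (C i) (a i + 1)) :
    IsSplit G (univ.biUnion C) (1 + ∑ i, a i) := by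
  induction l generalizing G with
  | zero => simp [IsSplit]
  | succ l ih =>
    have h0 : IsSplit G (C 0) (a 0 + 1) := by simpa using hC 0
    have hrest := ih (G := G.deleteEdges ↑(C 0)) (a := Fin.tail a) (C := Fin.tail C)
      fun i => by rw [← deleteEdges_prevUnion_succ]; exact hC i.succ
    have hsum : 1 + ∑ i, a i = a 0 + ∑ i, Fin.tail a i + 1 := by
      show _ = a 0 + ∑ i : Fin l, a i.succ + 1
      rw [Fin.sum_univ_succ]
      ring
    rw [add_comm 1] at hrest
    rw [biUnion_univ_fin_succ, hsum]
    exact h0.union hrest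

theorem density_biUnion_le {V : Type*} [Finite V] [DecidableEq V] {G : SimpleGraph V}
    {w : Sym2 V → ℝ} (hw : ∀ e ∈ G.edgeSet, 0 ≤ w e) {D : ℝ} (hD : 1 ≤ D) {n k : ℕ}
    {S : Finset (Sym2 V)} (hS : IsSplit G S k) {a b : Fin (n + 1) → ℕ} (ha : ∀ i, 1 ≤ a i)
    (hak : ∑ i, a i < k) {C : Fin (n + 1) → Finset (Sym2 V)}
    (hC : ∀ i, IsSplit (G.deleteEdges ↑(prevUnion C i)) (C i) (a i + 1))
    (hSi : ∀ i, IsSplit (G.deleteEdges ↑(prevUnion C i)) (S \ prevUnion C i) (b i))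
    (hdens : ∀ i, weight w (C i) / (a i : ℝ) ≤ D * weight w (S \ prevUnion C i) / (b i : ℝ))
    (hsparse : ∀ i : Fin (n + 1), (i : ℕ) + 1 < n + 1 →
      IsSparse (G.deleteEdges ↑(prevUnion C i)) w (C i) (a i + 1)) :
    density w (univ.biUnion C) (1 + ∑ i, a i) ≤ D * weight w S / k := by
  have hk : 1 < k := (ha 0).trans_lt
    ((Finset.single_le_sum (fun i _ => Nat.zero_le (a i)) (Finset.mem_univ 0)).trans_lt hak)
  induction n generalizing G k S with
  | zero =>
    have hb0 := hS.eq_of_one_lt (by simpa using hSi 0) hk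
    simpa [density, hb0] using hdens 0
  | succ n ih =>
    have hb0 := hS.eq_of_one_lt (by simpa using hSi 0) hk
    have hC0 : IsSplit G (C 0) (a 0 + 1) := by simpa using hC 0
    have hdens0 : weight w (C 0) / a 0 ≤ D * weight w S / k := by simpa [hb0] using hdens 0
    have hsum : ∑ i, a i = a 0 + ∑ i : Fin (n + 1), a i.succ := Fin.sum_univ_succ a
    have hm : 1 ≤ ∑ i : Fin (n + 1), a i.succ :=
      (ha (Fin.succ 0)).trans (Finset.single_le_sum (f := fun i : Fin (n + 1) => a i.succ)
        (fun i _ => Nat.zero_le _) (Finset.mem_univ 0))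
    have hSC : IsSplit (G.deleteEdges ↑(C 0)) (S \ C 0) (Fin.tail b 0) := by
      have := hSi (Fin.succ 0)
      rwa [deleteEdges_prevUnion_succ, sdiff_prevUnion_succ, prevUnion_zero, Finset.coe_empty,
        deleteEdges_empty, Finset.sdiff_empty] at this
    have hbk := hS.sub_one_le_sdiff_add hC0 hSC
    have hCt : ∀ i, IsSplit ((G.deleteEdges ↑(C 0)).deleteEdges ↑(prevUnion (Fin.tail C) i))
        (Fin.tail C i) (Fin.tail a i + 1) := fun i => by
      rw [← deleteEdges_prevUnion_succ]; exact hC i.succ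
    have hT := isSplit_biUnion hCt
    have hTdens := ih (fun e he => hw e (edgeSet_mono (deleteEdges_le _) he)) hSC
      (fun i => ha i.succ) (by omega) hCt
      (fun i => by rw [← deleteEdges_prevUnion_succ, ← sdiff_prevUnion_succ]; exact hSi i.succ)
      (fun i => by rw [← sdiff_prevUnion_succ]; exact hdens i.succ)
      (fun i hi => by rw [← deleteEdges_prevUnion_succ]; exact hsparse i.succ (by simpa using hi))
      (by omega)
    rw [add_comm 1] at hT hTdens
    rw [biUnion_univ_fin_succ, hsum, add_comm 1]
    exact IsSparse.density_union_le hw hD (ha 0) hm (by omega) hS hC0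
      (by simpa using hsparse 0 (by simp)) hSC hT hdens0 hTdens

theorem union_of_greedy_splits
    {V : Type*} [Fintype V] [DecidableEq V]
    (G : SimpleGraph V)
    (w : Sym2 V → ℝ) (hw : ∀ e ∈ G.edgeSet, 0 < w e)
    (k l : ℕ) (hl : 1 ≤ l)
    (S : Finset (Sym2 V)) (hS : IsSplit G S k)
    (a b : Fin l → ℕ) (ha : ∀ i, 1 ≤ a i) (hak : ∑ i, a i < k)
    (C : Fin l → Finset (Sym2 V))
    (hmin : ∀ i : Fin l,
      IsMinSplit (G.deleteEdges ↑(prevUnion C i)) w (C i) (a i + 1))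
    (hSi : ∀ i : Fin l,
      IsSplit (G.deleteEdges ↑(prevUnion C i)) (S \ prevUnion C i) (b i))
    (δ : ℝ) (hδ : 0 ≤ δ)
    (hdens : ∀ i : Fin l,
      weight w (C i) / (a i : ℝ) ≤ (1 + δ) * weight w (S \ prevUnion C i) / (b i : ℝ))
    (hsparse : ∀ i : Fin l, (i : ℕ) + 1 < l →
      IsSparse (G.deleteEdges ↑(prevUnion C i)) w (C i) (a i + 1)) :
    IsSplit G (Finset.univ.biUnion C) (1 + ∑ i, a i) ∧
      density w (Finset.univ.biUnion C) (1 + ∑ i, a i) ≤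
        (1 + δ) * weight w S / (k : ℝ) := by
  obtain ⟨n, rfl⟩ : ∃ n, l = n + 1 := ⟨l - 1, by omega⟩
  have hC : ∀ i, IsSplit (G.deleteEdges ↑(prevUnion C i)) (C i) (a i + 1) := fun i => (hmin i).1
  exact ⟨isSplit_biUnion hC, density_biUnion_le (fun e he => (hw e he).le) (by linarith) hS ha hak
    hC hSi hdens hsparse⟩

end KCut
end

section
/- Let c₁ > 0 and let 𝒢 be a class of finite simple graphs that is closed under taking induced subgraphs and has the following separator property: every graph in 𝒢 with n vertices contains a vertex set X of size at most c₁·√n such that the remaining vertices can be partitioned into two sets, each of size at most 2n/3, with no edges of the graph between them. Then there exists a constant c₂ > 0 (depending only on c₁) such that for every δ > 0 and every graph G ∈ 𝒢 with n vertices there is a vertex set Y of size at most c₂·n·δ whose removal leaves a graph in which every connected component has at most 1/δ² vertices. -/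
set_option maxHeartbeats 1000000

open Finset

namespace KCut

open scoped Classical

/-! ### Auxiliary lemmas -/

private lemma arith (c s n n₁ n₂ : ℝ) (hc : 0 < c) (hs : 12*c ≤ s)
    (hn : s^2 < n) (h1 : 0 ≤ n₁) (h2 : 0 ≤ n₂)
    (hsum : n₁ + n₂ ≤ n) (hlow : n - c * Real.sqrt n ≤ n₁ + n₂)
    (hu1 : n₁ ≤ 2*n/3) (hu2 : n₂ ≤ 2*n/3) :
    s * (c * Real.sqrt n) + max 0 (8*c*n₁ - 7*c*(s*Real.sqrt n₁))
      + max 0 (8*c*n₂ - 7*c*(s*Real.sqrt n₂)) ≤ 8*c*n - 7*c*(s*Real.sqrt n) := by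
  have hs0 : 0 < s := lt_of_lt_of_le (by linarith) hs
  have hn0 : (0:ℝ) ≤ n := le_of_lt (lt_of_le_of_lt (sq_nonneg s) hn)
  obtain ⟨a, ha0, rfl⟩ : ∃ a:ℝ, 0 ≤ a ∧ n = a^2 :=
    ⟨Real.sqrt n, Real.sqrt_nonneg n, (Real.sq_sqrt hn0).symm⟩
  obtain ⟨a1, ha10, rfl⟩ : ∃ b:ℝ, 0 ≤ b ∧ n₁ = b^2 :=
    ⟨Real.sqrt n₁, Real.sqrt_nonneg n₁, (Real.sq_sqrt h1).symm⟩
  obtain ⟨a2, ha20, rfl⟩ : ∃ b:ℝ, 0 ≤ b ∧ n₂ = b^2 :=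
    ⟨Real.sqrt n₂, Real.sqrt_nonneg n₂, (Real.sq_sqrt h2).symm⟩
  rw [Real.sqrt_sq ha0] at hlow ⊢
  rw [Real.sqrt_sq ha10, Real.sqrt_sq ha20]
  have hsa : s < a := by nlinarith
  have ha' : 0 < a := hs0.trans hsa
  have c8 : (0:ℝ) ≤ 8*c := by positivity
  have mixed : ∀ b : ℝ, 0 ≤ b → b^2 ≤ 2*a^2/3 → 8*s*a ≤ 8*(a^2 - b^2) + 7*s*b := by
    intro b hb hub
    have key : 7*a - 8*b ≥ 0 := by nlinarith [sq_nonneg (7*a - 8*b)]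
    nlinarith [mul_nonneg (sub_nonneg.2 hsa.le) key, mul_nonneg hb key]
  rcases le_or_gt (8*c*a1^2 - 7*c*(s*a1)) 0 with e1 | e1 <;>
    rcases le_or_gt (8*c*a2^2 - 7*c*(s*a2)) 0 with e2 | e2
  · rw [max_eq_left e1, max_eq_left e2]
    have h8 : s*a ≤ a*a := mul_le_mul_of_nonneg_right hsa.le ha0
    linarith [mul_le_mul_of_nonneg_left h8 c8]
  · rw [max_eq_left e1, max_eq_right e2.le]
    have h := mixed a2 ha20 (by linarith)
    linarith [mul_le_mul_of_nonneg_left h hc.le]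
  · rw [max_eq_right e1.le, max_eq_left e2]
    have h := mixed a1 ha10 (by linarith)
    linarith [mul_le_mul_of_nonneg_left h hc.le]
  · rw [max_eq_right e1.le, max_eq_right e2.le]
    have hca : c*a ≤ a^2/12 := by nlinarith
    have hb1 : a/2 ≤ a1 := by nlinarith
    have hb2 : a/2 ≤ a2 := by nlinarith
    have hprod : a^2/4 ≤ a1*a2 := by
      have := mul_le_mul hb1 hb2 (by linarith : (0:ℝ) ≤ a/2) ha10
      nlinarith [this]
    have hsq : (17/12)*a^2 ≤ (a1+a2)^2 := by nlinarith [hprod, hlow, hca]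
    have hkey : 8*a ≤ 7*(a1+a2) := by
      nlinarith [hsq, add_nonneg ha10 ha20, sq_nonneg (7*(a1+a2)-8*a)]
    have := mul_le_mul_of_nonneg_left hkey (mul_nonneg hc.le hs0.le)
    linarith [mul_le_mul_of_nonneg_left hsum c8]

private def psi {V : Type} {Y A : Set V} (YA : Set ↥A)
    (hmem : ∀ a : ↥A, (a:V) ∈ Y ↔ a ∈ YA) (u : ↥(Yᶜ)) (hu : (u:V) ∈ A) :
    ↥(YAᶜ : Set ↥A) :=
  ⟨⟨u, hu⟩, fun h => u.2 ((hmem ⟨u, hu⟩).mpr h)⟩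

private lemma comp_bound {V : Type} [Finite V] (G : SimpleGraph V) (Y : Set V) (A : Set V)
    (YA : Set ↥A)
    (hAdj : ∀ u w : ↥(Yᶜ), (G.induce Yᶜ).Adj u w → (u:V) ∈ A → (w:V) ∈ A)
    (hmem : ∀ a : ↥A, (a:V) ∈ Y ↔ a ∈ YA)
    (bound : ℝ)
    (hcomp : ∀ cc : ((G.induce A).induce (YAᶜ)).ConnectedComponent,
      (Nat.card cc.supp : ℝ) ≤ bound)
    (cc : (G.induce Yᶜ).ConnectedComponent) (v : ↥(Yᶜ)) (hv : v ∈ cc.supp)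
    (hvA : (v:V) ∈ A) :
    (Nat.card cc.supp : ℝ) ≤ bound := by
  have step : ∀ u w : ↥(Yᶜ), (G.induce Yᶜ).Adj u w → ∀ hu : (u:V) ∈ A,
      ∃ hw : (w:V) ∈ A,
        ((G.induce A).induce (YAᶜ)).Adj (psi YA hmem u hu) (psi YA hmem w hw) := by
    intro u w huw hu
    have hw : (w:V) ∈ A := hAdj u w huw hu
    refine ⟨hw, ?_⟩
    simpa [psi, SimpleGraph.comap] using
      (by simpa [SimpleGraph.comap] using huw : G.Adj u w)
  have main : ∀ (x u : ↥(Yᶜ)) (p : (G.induce Yᶜ).Walk x u) (hx : (x:V) ∈ A),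
      ∃ hu : (u:V) ∈ A,
        ((G.induce A).induce (YAᶜ)).Reachable (psi YA hmem x hx) (psi YA hmem u hu) := by
    intro x u p
    induction p with
    | nil => exact fun hx => ⟨hx, SimpleGraph.Reachable.refl _⟩
    | cons h q ih =>
      intro hx
      obtain ⟨hw, hadj⟩ := step _ _ h hx
      obtain ⟨hu, hr⟩ := ih hw
      exact ⟨hu, hadj.reachable.trans hr⟩
  classical
  have hreach : ∀ u : ↥(Yᶜ), u ∈ cc.supp → ∃ hu : (u:V) ∈ A,
      psi YA hmem u hu ∈
        (((G.induce A).induce (YAᶜ)).connectedComponentMk (psi YA hmem v hvA)).supp := by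
    intro u hu
    have hr : (G.induce Yᶜ).Reachable v u := by
      rw [SimpleGraph.ConnectedComponent.mem_supp_iff] at hv hu
      exact SimpleGraph.ConnectedComponent.eq.mp (hv.trans hu.symm)
    obtain ⟨p⟩ := hr
    obtain ⟨hu', hr'⟩ := main v u p hvA
    exact ⟨hu', by
      rw [SimpleGraph.ConnectedComponent.mem_supp_iff]
      exact (SimpleGraph.ConnectedComponent.eq.mpr hr'.symm)⟩
  have hcard : Nat.card cc.supp ≤
      Nat.card (((G.induce A).induce (YAᶜ)).connectedComponentMk (psi YA hmem v hvA)).supp := by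
    refine Nat.card_le_card_of_injective
      (fun u => ⟨psi YA hmem u.1 (hreach u.1 u.2).choose, (hreach u.1 u.2).choose_spec⟩) ?_
    intro u₁ u₂ h
    have h1 := Subtype.ext_iff.mp h
    have h2 := Subtype.ext_iff.mp h1
    have h3 := Subtype.ext_iff.mp h2
    exact Subtype.ext (Subtype.ext (by exact h3))
  calc (Nat.card cc.supp : ℝ)
      ≤ _ := by exact_mod_cast hcard
    _ ≤ bound := hcomp _

private lemma key (c₁ s : ℝ) (hc₁ : 0 < c₁) (hs : 12*c₁ ≤ s)
    (𝒢 : ∀ V : Type, SimpleGraph V → Prop)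
    (hclosed : ∀ (V : Type) (G : SimpleGraph V), 𝒢 V G →
      ∀ t : Set V, 𝒢 t (G.induce t))
    (hsep : ∀ (V : Type) [Finite V] (G : SimpleGraph V), 𝒢 V G →
      ∃ X A B : Set V,
        X ∪ A ∪ B = Set.univ ∧
        Disjoint X A ∧ Disjoint X B ∧ Disjoint A B ∧
        (X.ncard : ℝ) ≤ c₁ * Real.sqrt (Nat.card V) ∧
        (A.ncard : ℝ) ≤ 2 * (Nat.card V : ℝ) / 3 ∧
        (B.ncard : ℝ) ≤ 2 * (Nat.card V : ℝ) / 3 ∧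
        ∀ a ∈ A, ∀ b ∈ B, ¬ G.Adj a b) :
    ∀ n : ℕ, ∀ (V : Type) [Finite V], Nat.card V = n → ∀ G : SimpleGraph V, 𝒢 V G →
      ∃ Y : Set V,
        s * (Y.ncard : ℝ) ≤ max 0 (8*c₁*(n:ℝ) - 7*c₁*(s*Real.sqrt n)) ∧
        ∀ cc : (G.induce Yᶜ).ConnectedComponent, (Nat.card cc.supp : ℝ) ≤ s^2 := by
  have hs0 : 0 < s := lt_of_lt_of_le (by linarith) hs
  intro n
  induction n using Nat.strong_induction_on with
  | _ n IH =>
  intro V _ hVn G hG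
  rcases le_or_gt ((n:ℝ)) (s^2) with hsmall | hbig
  · -- base case : every component is at most the whole vertex set
    refine ⟨∅, by simp, ?_⟩
    intro cc
    have h1 : Nat.card cc.supp ≤ Nat.card ↥((∅:Set V)ᶜ) :=
      Nat.card_le_card_of_injective Subtype.val Subtype.val_injective
    have h2 : Nat.card ↥((∅:Set V)ᶜ) ≤ Nat.card V :=
      Nat.card_le_card_of_injective Subtype.val Subtype.val_injective
    have : (Nat.card cc.supp : ℝ) ≤ (n:ℝ) := by
      rw [← hVn]; exact_mod_cast h1.trans h2
    linarith
  · obtain ⟨X, A, B, hpart, hXA, hXB, hAB, hXcard, hAcard, hBcard, hGAB⟩ := hsep V G hG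
    rw [hVn] at hXcard hAcard hBcard
    have hn1 : 1 ≤ n := by
      by_contra h
      push_neg at h
      interval_cases n
      · simp at hbig; nlinarith [sq_nonneg s]
    -- sizes
    have hAlt : A.ncard < n := by
      have : (A.ncard : ℝ) < n := by
        have : (0:ℝ) < n := by exact_mod_cast hn1
        linarith
      exact_mod_cast this
    have hBlt : B.ncard < n := by
      have : (B.ncard : ℝ) < n := by
        have : (0:ℝ) < n := by exact_mod_cast hn1
        linarith
      exact_mod_cast this
    -- cardinality partition
    have hsum : X.ncard + A.ncard + B.ncard = n := by
      have d1 : Disjoint (X ∪ A) B := Set.disjoint_union_left.mpr ⟨hXB, hAB⟩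
      have e1 : (X ∪ A ∪ B).ncard = (X ∪ A).ncard + B.ncard := Set.ncard_union_eq d1
      have e2 : (X ∪ A).ncard = X.ncard + A.ncard := Set.ncard_union_eq hXA
      rw [hpart] at e1
      rw [Set.ncard_univ, hVn] at e1
      omega
    -- induction hypotheses for A and B
    obtain ⟨YA, hYAcard, hYAcomp⟩ :=
      IH A.ncard hAlt ↥A (Nat.card_coe_set_eq A) (G.induce A) (hclosed V G hG A)
    obtain ⟨YB, hYBcard, hYBcomp⟩ :=
      IH B.ncard hBlt ↥B (Nat.card_coe_set_eq B) (G.induce B) (hclosed V G hG B)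
    set Y := X ∪ Subtype.val '' YA ∪ Subtype.val '' YB with hYdef
    refine ⟨Y, ?_, ?_⟩
    · -- cardinality bound
      have hY : Y.ncard ≤
          X.ncard + YA.ncard + YB.ncard := by
        calc Y.ncard
            ≤ (X ∪ Subtype.val '' YA).ncard + (Subtype.val '' YB).ncard :=
              Set.ncard_union_le _ _
          _ ≤ X.ncard + (Subtype.val '' YA).ncard + (Subtype.val '' YB).ncard := by
              have := Set.ncard_union_le X (Subtype.val '' YA)
              omega
          _ = X.ncard + YA.ncard + YB.ncard := by
              rw [Set.ncard_image_of_injective _ Subtype.val_injective,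
                Set.ncard_image_of_injective _ Subtype.val_injective]
      have hcast : ((X.ncard:ℝ) + A.ncard + B.ncard) = (n:ℝ) := by exact_mod_cast hsum
      have hX0 : (0:ℝ) ≤ (X.ncard:ℝ) := by positivity
      have harith := arith c₁ s (n:ℝ) (A.ncard:ℝ) (B.ncard:ℝ) hc₁ hs hbig
        (by positivity) (by positivity)
        (by linarith)
        (by linarith)
        hAcard hBcard
      have hsX : s * (X.ncard:ℝ) ≤ s * (c₁ * Real.sqrt n) :=
        mul_le_mul_of_nonneg_left hXcard hs0.le
      calc s * (Y.ncard : ℝ)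
          ≤ s * ((X.ncard : ℝ) + YA.ncard + YB.ncard) := by
            have : (Y.ncard : ℝ) ≤
                (X.ncard : ℝ) + YA.ncard + YB.ncard := by exact_mod_cast hY
            exact mul_le_mul_of_nonneg_left this hs0.le
        _ = s * (X.ncard:ℝ) + s * (YA.ncard:ℝ) + s * (YB.ncard:ℝ) := by ring
        _ ≤ s * (c₁ * Real.sqrt n) + max 0 (8*c₁*(A.ncard:ℝ) - 7*c₁*(s*Real.sqrt (A.ncard:ℝ)))
              + max 0 (8*c₁*(B.ncard:ℝ) - 7*c₁*(s*Real.sqrt (B.ncard:ℝ))) := by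
            exact add_le_add (add_le_add hsX hYAcard) hYBcard
        _ ≤ 8*c₁*(n:ℝ) - 7*c₁*(s*Real.sqrt n) := harith
        _ ≤ max 0 (8*c₁*(n:ℝ) - 7*c₁*(s*Real.sqrt n)) := le_max_right _ _
    · -- component bound
      intro cc
      obtain ⟨v, hvrep⟩ := cc.exists_rep
      have hv : v ∈ cc.supp := by
        rw [SimpleGraph.ConnectedComponent.mem_supp_iff]; exact hvrep
      have hvY : (v:V) ∉ Y := v.2
      have hvU : (v:V) ∈ X ∪ A ∪ B := by rw [hpart]; exact Set.mem_univ _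
      have hvX : (v:V) ∉ X := fun h => hvY (Or.inl (Or.inl h))
      -- a generic adjacency-preservation fact
      have hadjA : ∀ u w : ↥(Yᶜ), (G.induce Yᶜ).Adj u w → (u:V) ∈ A → (w:V) ∈ A := by
        intro u w huw hu
        have hG' : G.Adj u w := by simpa [SimpleGraph.comap] using huw
        have hwU : (w:V) ∈ X ∪ A ∪ B := by rw [hpart]; exact Set.mem_univ _
        rcases hwU with (hw | hw) | hw
        · exact absurd (Or.inl (Or.inl hw)) w.2
        · exact hw
        · exact absurd hG' (hGAB _ hu _ hw)
      have hadjB : ∀ u w : ↥(Yᶜ), (G.induce Yᶜ).Adj u w → (u:V) ∈ B → (w:V) ∈ B := by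
        intro u w huw hu
        have hG' : G.Adj u w := by simpa [SimpleGraph.comap] using huw
        have hwU : (w:V) ∈ X ∪ A ∪ B := by rw [hpart]; exact Set.mem_univ _
        rcases hwU with (hw | hw) | hw
        · exact absurd (Or.inl (Or.inl hw)) w.2
        · exact absurd hG'.symm (hGAB _ hw _ hu)
        · exact hw
      have hmemA : ∀ a : ↥A, (a:V) ∈ Y ↔ a ∈ YA := by
        intro a
        constructor
        · rintro ((h | ⟨b, hb, hval⟩) | ⟨b, hb, hval⟩)
          · exact absurd a.2 (Set.disjoint_left.mp hXA h)
          · rwa [← Subtype.ext hval.symm] at hb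
          · exact absurd (hval ▸ b.2) (Set.disjoint_left.mp hAB a.2)
        · intro h; exact Or.inl (Or.inr ⟨a, h, rfl⟩)
      have hmemB : ∀ b : ↥B, (b:V) ∈ Y ↔ b ∈ YB := by
        intro b
        constructor
        · rintro ((h | ⟨a, ha, hval⟩) | ⟨a, ha, hval⟩)
          · exact absurd b.2 (Set.disjoint_left.mp hXB h)
          · exact absurd (hval ▸ a.2) (Set.disjoint_right.mp hAB b.2)
          · rwa [← Subtype.ext hval.symm] at ha
        · intro h; exact Or.inr ⟨b, h, rfl⟩
      rcases hvU with (hvX' | hvA) | hvB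
      · exact absurd hvX' hvX
      · exact comp_bound G Y A YA hadjA hmemA (s^2) hYAcomp cc v hv hvA
      · exact comp_bound G Y B YB hadjB hmemB (s^2) hYBcomp cc v hv hvB

theorem small_components_of_separator_class
    (c₁ : ℝ) (hc₁ : 0 < c₁)
    (𝒢 : ∀ V : Type, SimpleGraph V → Prop)
    (hclosed : ∀ (V : Type) (G : SimpleGraph V), 𝒢 V G →
      ∀ s : Set V, 𝒢 s (G.induce s))
    (hsep : ∀ (V : Type) [Finite V] (G : SimpleGraph V), 𝒢 V G →
      ∃ X A B : Set V,
        X ∪ A ∪ B = Set.univ ∧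
        Disjoint X A ∧ Disjoint X B ∧ Disjoint A B ∧
        (X.ncard : ℝ) ≤ c₁ * Real.sqrt (Nat.card V) ∧
        (A.ncard : ℝ) ≤ 2 * (Nat.card V : ℝ) / 3 ∧
        (B.ncard : ℝ) ≤ 2 * (Nat.card V : ℝ) / 3 ∧
        ∀ a ∈ A, ∀ b ∈ B, ¬ G.Adj a b) :
    ∃ c₂ : ℝ, 0 < c₂ ∧
      ∀ δ : ℝ, 0 < δ → ∀ (V : Type) [Finite V] (G : SimpleGraph V), 𝒢 V G →
        ∃ Y : Set V, (Y.ncard : ℝ) ≤ c₂ * (Nat.card V : ℝ) * δ ∧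
          ∀ cc : (G.induce Yᶜ).ConnectedComponent,
            (Nat.card cc.supp : ℝ) ≤ 1 / δ ^ 2 := by
  refine ⟨12 * c₁, by linarith, ?_⟩
  intro δ hδ V _ G hG
  rcases le_or_gt 1 (12 * c₁ * δ) with hbig | hsmall
  · refine ⟨Set.univ, ?_, ?_⟩
    · rw [Set.ncard_univ]
      have hn0 : (0:ℝ) ≤ (Nat.card V : ℝ) := by positivity
      nlinarith
    · intro cc
      obtain ⟨v, _⟩ := cc.exists_rep
      exact absurd v.2 (by simp)
  · have hs : 12 * c₁ ≤ 1/δ := by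
      rw [le_div_iff₀ hδ]; linarith
    obtain ⟨Y, hY1, hY2⟩ := key c₁ (1/δ) hc₁ hs 𝒢 hclosed hsep (Nat.card V) V rfl G hG
    refine ⟨Y, ?_, ?_⟩
    · have hmax : max 0 (8*c₁*((Nat.card V:ℕ):ℝ) - 7*c₁*((1/δ)*Real.sqrt (Nat.card V)))
          ≤ 8*c₁*(Nat.card V:ℝ) := by
        apply max_le (by positivity)
        have : 0 ≤ 7*c₁*((1/δ)*Real.sqrt (Nat.card V)) := by positivity
        linarith
      have h1 : (1/δ) * (Y.ncard : ℝ) ≤ 8*c₁*(Nat.card V:ℝ) := hY1.trans hmax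
      rw [one_div, inv_mul_eq_div, div_le_iff₀ hδ] at h1
      have : (0:ℝ) ≤ c₁ * (Nat.card V:ℝ) * δ := by positivity
      linarith [h1]
    · intro cc
      have := hY2 cc
      rwa [div_pow, one_pow] at this
end KCut
end

section
/- Let ε > 0, let h ≥ 1 be an integer, and let G be a connected normalized weighted graph on k vertices. Suppose that for every edge set F ⊆ E(G), every integer m ≥ h, and every m-way split S' of the graph G − F, the graph G − F has a split with separation degree at most h and density at most (1+ε)·w(S')/m. Then for every integer s with h·(1 + 1/ε) ≤ s ≤ k, the graph G has an s-way split whose density is at most (1 + 2ε)/k. -/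
open Finset

namespace KCut

open scoped Classical

section Aux

variable {V : Type*}

lemma reachable_deleteEdges_of_forall {H : SimpleGraph V} {s : Set (Sym2 V)}
    (hs : ∀ a b : V, H.Adj a b → s(a, b) ∈ s → (H.deleteEdges s).Reachable a b) :
    ∀ a b : V, H.Reachable a b → (H.deleteEdges s).Reachable a b := by
  intro a b hab
  rw [SimpleGraph.reachable_iff_reflTransGen] at hab
  induction hab with
  | refl => exact SimpleGraph.Reachable.refl _
  | @tail b c hxb hadj ih =>
    refine ih.trans ?_
    by_cases hm : s(b, c) ∈ s
    · exact hs _ _ hadj hm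
    · exact (SimpleGraph.deleteEdges_adj.mpr ⟨hadj, hm⟩).reachable

lemma numComp_deleteEdges_eq {H : SimpleGraph V} {s : Set (Sym2 V)}
    (hs : ∀ a b : V, H.Adj a b → s(a, b) ∈ s → (H.deleteEdges s).Reachable a b) :
    numComp (H.deleteEdges s) = numComp H := by
  have key := reachable_deleteEdges_of_forall hs
  refine Nat.card_eq_of_bijective
    (Quot.lift (fun v => H.connectedComponentMk v)
      (fun a b hr => SimpleGraph.ConnectedComponent.sound
        (hr.mono (SimpleGraph.deleteEdges_le s)))) ⟨?_, ?_⟩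
  · intro c d
    refine SimpleGraph.ConnectedComponent.ind₂ (fun x y hxy => ?_) c d
    exact SimpleGraph.ConnectedComponent.sound
      (key x y (SimpleGraph.ConnectedComponent.exact hxy))
  · intro c
    refine SimpleGraph.ConnectedComponent.ind (fun v => ?_) c
    exact ⟨(H.deleteEdges s).connectedComponentMk v, rfl⟩

lemma reachable_delete_single_cases {H : SimpleGraph V} {u v : V} :
    ∀ a b : V, H.Reachable a b →
      (H.deleteEdges {s(u, v)}).Reachable a b ∨
      ((H.deleteEdges {s(u, v)}).Reachable a u ∧ (H.deleteEdges {s(u, v)}).Reachable v b) ∨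
      ((H.deleteEdges {s(u, v)}).Reachable a v ∧ (H.deleteEdges {s(u, v)}).Reachable u b) := by
  intro a b hab
  rw [SimpleGraph.reachable_iff_reflTransGen] at hab
  induction hab with
  | refl => exact Or.inl (SimpleGraph.Reachable.refl _)
  | @tail b c hxb hadj ih =>
    by_cases hm : s(b, c) = s(u, v)
    · rw [Sym2.eq_iff] at hm
      rcases hm with ⟨hb, hc⟩ | ⟨hb, hc⟩
      · subst hb; subst hc
        rcases ih with h1 | ⟨h2, h3⟩ | ⟨h2, h3⟩
        · exact Or.inr (Or.inl ⟨h1, SimpleGraph.Reachable.refl _⟩)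
        · exact Or.inr (Or.inl ⟨h2, SimpleGraph.Reachable.refl _⟩)
        · exact Or.inl h2
      · subst hb; subst hc
        rcases ih with h1 | ⟨h2, h3⟩ | ⟨h2, h3⟩
        · exact Or.inr (Or.inr ⟨h1, SimpleGraph.Reachable.refl _⟩)
        · exact Or.inl h2
        · exact Or.inr (Or.inr ⟨h2, SimpleGraph.Reachable.refl _⟩)
    · have hK : (H.deleteEdges {s(u, v)}).Reachable b c :=
        (SimpleGraph.deleteEdges_adj.mpr ⟨hadj, by simpa using hm⟩).reachable
      rcases ih with h1 | ⟨h2, h3⟩ | ⟨h2, h3⟩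
      · exact Or.inl (h1.trans hK)
      · exact Or.inr (Or.inl ⟨h2, h3.trans hK⟩)
      · exact Or.inr (Or.inr ⟨h2, h3.trans hK⟩)

lemma numComp_deleteEdges_single [Finite V] {H : SimpleGraph V} {u v : V}
    (hadj : H.Adj u v)
    (hnr : ¬ (H.deleteEdges {s(u, v)}).Reachable u v) :
    numComp (H.deleteEdges {s(u, v)}) = numComp H + 1 := by
  set K := H.deleteEdges {s(u, v)} with hKdef
  haveI : Finite K.ConnectedComponent := Quot.finite _
  haveI : Finite H.ConnectedComponent := Quot.finite _
  set φ : K.ConnectedComponent → H.ConnectedComponent :=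
    Quot.lift (fun x => H.connectedComponentMk x)
      (fun a b hr => SimpleGraph.ConnectedComponent.sound
        (hr.mono (SimpleGraph.deleteEdges_le _))) with hφ
  have hφmk : ∀ x : V, φ (K.connectedComponentMk x) = H.connectedComponentMk x := fun x => rfl
  set θ : K.ConnectedComponent → Option H.ConnectedComponent :=
    fun C => if C = K.connectedComponentMk v then none else some (φ C) with hθ
  have hinj : Function.Injective θ := by
    intro C D hCD
    by_cases hC : C = K.connectedComponentMk v <;> by_cases hD : D = K.connectedComponentMk v
    · rw [hC, hD]
    · simp only [hθ, if_pos hC, if_neg hD] at hCD; exact absurd hCD.symm (Option.some_ne_none _)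
    · simp only [hθ, if_neg hC, if_pos hD] at hCD; exact absurd hCD (Option.some_ne_none _)
    · simp only [hθ, if_neg hC, if_neg hD, Option.some_inj] at hCD
      revert hC hD hCD
      refine SimpleGraph.ConnectedComponent.ind₂ (fun x y hC hD hxy => ?_) C D
      rw [hφmk, hφmk, SimpleGraph.ConnectedComponent.eq] at hxy
      rcases reachable_delete_single_cases (u := u) (v := v) x y hxy with h1 | ⟨h2, h3⟩ | ⟨h2, h3⟩
      · exact SimpleGraph.ConnectedComponent.sound h1
      · exact absurd (SimpleGraph.ConnectedComponent.sound h3.symm) hD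
      · exact absurd (SimpleGraph.ConnectedComponent.sound h2) hC
  have hsurj : Function.Surjective θ := by
    intro o
    match o with
    | none => exact ⟨K.connectedComponentMk v, by simp [hθ]⟩
    | some c =>
      revert c
      refine SimpleGraph.ConnectedComponent.ind (fun x => ?_)
      by_cases hx : K.connectedComponentMk x = K.connectedComponentMk v
      · refine ⟨K.connectedComponentMk u, ?_⟩
        have hne : K.connectedComponentMk u ≠ K.connectedComponentMk v := by
          intro hcon; exact hnr (SimpleGraph.ConnectedComponent.exact hcon)
        have hux : H.connectedComponentMk u = H.connectedComponentMk x := by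
          rw [SimpleGraph.ConnectedComponent.eq] at hx ⊢
          exact (hadj.reachable.trans ((hx.mono (SimpleGraph.deleteEdges_le _)).symm))
        simp only [hθ, if_neg hne, hφmk, hux]
      · exact ⟨K.connectedComponentMk x, by simp only [hθ, if_neg hx, hφmk]⟩
  have hcard := Nat.card_eq_of_bijective θ ⟨hinj, hsurj⟩
  rw [Finite.card_option] at hcard
  exact hcard

lemma numComp_bot [Fintype V] : numComp (⊥ : SimpleGraph V) = Fintype.card V := by
  rw [numComp, ← Nat.card_eq_fintype_card]
  refine (Nat.card_eq_of_bijective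
    (fun v => (⊥ : SimpleGraph V).connectedComponentMk v) ⟨?_, ?_⟩).symm
  · intro x y hxy
    exact SimpleGraph.reachable_bot.mp (SimpleGraph.ConnectedComponent.exact hxy)
  · intro c
    refine SimpleGraph.ConnectedComponent.ind (fun v => ⟨v, rfl⟩) c

lemma numComp_connected {G : SimpleGraph V} (h : G.Connected) : numComp G = 1 := by
  rw [numComp, Nat.card_eq_one_iff_unique]
  constructor
  · constructor
    intro a b
    exact SimpleGraph.ConnectedComponent.ind₂
      (fun x y => SimpleGraph.ConnectedComponent.sound (h.preconnected x y)) a b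
  · haveI := h.nonempty
    exact ⟨G.connectedComponentMk Classical.ofNonempty⟩

lemma numComp_le_card [Fintype V] (G : SimpleGraph V) : numComp G ≤ Fintype.card V := by
  rw [numComp, ← Nat.card_eq_fintype_card]
  exact Nat.card_le_card_of_surjective (fun v => G.connectedComponentMk v)
    (fun c => SimpleGraph.ConnectedComponent.ind (fun v => ⟨v, rfl⟩) c)

lemma one_le_numComp [Finite V] [Nonempty V] (G : SimpleGraph V) : 1 ≤ numComp G := by
  haveI : Finite G.ConnectedComponent := Quot.finite _
  haveI : Nonempty G.ConnectedComponent :=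
    Nonempty.map (fun v => G.connectedComponentMk v) ‹Nonempty V›
  exact Nat.card_pos

lemma exists_drop [Finite V] {G : SimpleGraph V} {F : Finset (Sym2 V)}
    (hF : ↑F ⊆ G.edgeSet) (hgt : numComp G < numComp (G.deleteEdges ↑F)) :
    ∃ e ∈ F, numComp (G.deleteEdges ↑(F.erase e)) + 1 = numComp (G.deleteEdges ↑F) := by
  have hex : ¬ ∀ a b : V, G.Adj a b → s(a, b) ∈ (↑F : Set (Sym2 V)) →
      (G.deleteEdges ↑F).Reachable a b := by
    intro hall
    rw [numComp_deleteEdges_eq hall] at hgt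
    exact lt_irrefl _ hgt
  push_neg at hex
  obtain ⟨a, b, hadj, hmem, hnr⟩ := hex
  have hmem' : s(a, b) ∈ F := hmem
  refine ⟨s(a, b), hmem', ?_⟩
  have hset : (↑(F.erase s(a, b)) : Set (Sym2 V)) ∪ {s(a, b)} = ↑F := by
    ext e
    simp only [Set.mem_union, Finset.coe_erase, Set.mem_diff, Set.mem_singleton_iff,
      Finset.mem_coe]
    constructor
    · rintro (⟨he, _⟩ | rfl)
      · exact he
      · exact hmem'
    · intro he
      by_cases hcase : e = s(a, b)
      · exact Or.inr hcase
      · exact Or.inl ⟨he, hcase⟩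
  have hGdel : G.deleteEdges ↑F = (G.deleteEdges ↑(F.erase s(a, b))).deleteEdges {s(a, b)} := by
    rw [SimpleGraph.deleteEdges_deleteEdges, hset]
  have hadj' : (G.deleteEdges ↑(F.erase s(a, b))).Adj a b := by
    rw [SimpleGraph.deleteEdges_adj]
    exact ⟨hadj, by simp⟩
  rw [hGdel] at hnr ⊢
  exact (numComp_deleteEdges_single hadj' hnr).symm

lemma trim [Finite V] {G : SimpleGraph V} {s : ℕ}
    (hG1 : numComp G ≤ s) :
    ∀ (n : ℕ) (F : Finset (Sym2 V)), ↑F ⊆ G.edgeSet →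
      s ≤ numComp (G.deleteEdges ↑F) → numComp (G.deleteEdges ↑F) ≤ s + n →
      ∃ S : Finset (Sym2 V), S ⊆ F ∧ numComp (G.deleteEdges ↑S) = s := by
  intro n
  induction n with
  | zero =>
    intro F hF h1 h2
    exact ⟨F, Finset.Subset.refl F, le_antisymm (by simpa using h2) h1⟩
  | succ n ih =>
    intro F hF h1 h2
    by_cases heq : numComp (G.deleteEdges ↑F) = s
    · exact ⟨F, Finset.Subset.refl F, heq⟩
    · have hgt : numComp G < numComp (G.deleteEdges ↑F) := by omega
      obtain ⟨e, heF, hdrop⟩ := exists_drop hF hgt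
      obtain ⟨S, hS1, hS2⟩ := ih (F.erase e)
        ((Finset.coe_subset.mpr (Finset.erase_subset e F)).trans hF) (by omega) (by omega)
      exact ⟨S, hS1.trans (Finset.erase_subset e F), hS2⟩

end Aux

set_option maxHeartbeats 1000000 in
theorem low_density_large_split_of_greedy_property
    {V : Type*} [Fintype V] [DecidableEq V]
    (G : SimpleGraph V) [DecidableRel G.Adj]
    (w : Sym2 V → ℝ) (hw : ∀ e ∈ G.edgeSet, 0 < w e)
    (hconn : G.Connected)
    (hnorm : weight w G.edgeFinset = 1)
    (ε : ℝ) (hε : 0 < ε)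
    (h : ℕ) (hh : 1 ≤ h)
    (hhyp : ∀ F : Finset (Sym2 V), ↑F ⊆ G.edgeSet →
      ∀ m : ℕ, h ≤ m → ∀ S' : Finset (Sym2 V), IsSplit (G.deleteEdges ↑F) S' m →
        ∃ (T : Finset (Sym2 V)) (h' : ℕ), 2 ≤ h' ∧ h' ≤ h ∧
          IsSplit (G.deleteEdges ↑F) T h' ∧
          density w T h' ≤ (1 + ε) * weight w S' / (m : ℝ))
    (s : ℕ) (hs1 : (h : ℝ) * (1 + 1 / ε) ≤ (s : ℝ)) (hs2 : s ≤ Fintype.card V) :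
    ∃ S : Finset (Sym2 V), IsSplit G S s ∧
      density w S s ≤ (1 + 2 * ε) / (Fintype.card V : ℝ) := by
  set k := Fintype.card V with hkdef
  -- basic numeric facts
  have hh1R : (1 : ℝ) ≤ (h : ℝ) := by exact_mod_cast hh
  have hkey : (h : ℝ) + ε * h ≤ ε * s := by
    have h1 : (h : ℝ) * (1 + 1 / ε) * ε ≤ (s : ℝ) * ε :=
      mul_le_mul_of_nonneg_right hs1 hε.le
    have h2 : (h : ℝ) * (1 + 1 / ε) * ε = h * ε + h := by
      field_simp
    nlinarith [h1, h2]
  have hεh : ε * 1 ≤ ε * (h : ℝ) := mul_le_mul_of_nonneg_left hh1R hε.le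
  have hs1R : (1 : ℝ) < (s : ℝ) := by nlinarith [hkey, hh1R, hε, hεh]
  have hsnat2 : 2 ≤ s := by
    have : 1 < s := by exact_mod_cast hs1R
    omega
  have hs2R : (2 : ℝ) ≤ (s : ℝ) := by exact_mod_cast hsnat2
  have hk2 : 2 ≤ k := le_trans hsnat2 hs2
  have hkR : (2 : ℝ) ≤ (k : ℝ) := by exact_mod_cast hk2
  have hkpos : (0 : ℝ) < (k : ℝ) := by linarith
  have hspos : (0 : ℝ) < (s : ℝ) - 1 := by linarith
  haveI : Nonempty V := by
    rw [← Fintype.card_pos_iff]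
    omega
  have hGcomp : numComp G = 1 := numComp_connected hconn
  -- weight helper
  have hwnn : ∀ F : Finset (Sym2 V), ↑F ⊆ G.edgeSet → 0 ≤ weight w F := by
    intro F hF
    exact Finset.sum_nonneg fun e he => (hw e (hF he)).le
  have hwmono : ∀ S F : Finset (Sym2 V), S ⊆ F → ↑F ⊆ G.edgeSet →
      weight w S ≤ weight w F := by
    intro S F hSF hF
    exact Finset.sum_le_sum_of_subset_of_nonneg hSF
      (fun e he _ => (hw e (hF he)).le)
  -- the end game: from a set with exactly the right weight bound, trim and conclude
  have finish : ∀ F : Finset (Sym2 V), ↑F ⊆ G.edgeSet →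
      s ≤ numComp (G.deleteEdges ↑F) →
      weight w F * (k : ℝ) ≤ (1 + 2 * ε) * ((s : ℝ) - 1) →
      ∃ S : Finset (Sym2 V), IsSplit G S s ∧
        density w S s ≤ (1 + 2 * ε) / (k : ℝ) := by
    intro F hF hcomp hwt
    obtain ⟨S, hSF, hScomp⟩ := trim (G := G) (s := s) (by omega)
      (numComp (G.deleteEdges ↑F)) F hF hcomp (by omega)
    have hSsub : ↑S ⊆ G.edgeSet := (Finset.coe_subset.mpr hSF).trans hF
    refine ⟨S, ⟨hSsub, by rw [hScomp, hGcomp]; omega⟩, ?_⟩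
    have hwS : weight w S ≤ weight w F := hwmono S F hSF hF
    rw [density, div_le_div_iff₀ hspos hkpos]
    calc weight w S * (k : ℝ) ≤ weight w F * (k : ℝ) := by nlinarith
      _ ≤ (1 + 2 * ε) * ((s : ℝ) - 1) := hwt
  by_cases hcase : (k : ℝ) ≤ (1 + 2 * ε) * ((s : ℝ) - 1)
  · -- trivial case: cut everything and trim
    have hbot : G.deleteEdges ↑G.edgeFinset = ⊥ := by
      ext a b
      simp [SimpleGraph.deleteEdges_adj, SimpleGraph.mem_edgeFinset]
    refine finish G.edgeFinset (by simp [Set.subset_def, SimpleGraph.mem_edgeFinset]) ?_ ?_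
    · rw [hbot, numComp_bot]; exact hs2
    · rw [hnorm, one_mul]; exact hcase
  · push_neg at hcase
    -- greedy growth
    have grow : ∀ (n : ℕ) (F : Finset (Sym2 V)), ↑F ⊆ G.edgeSet →
        numComp (G.deleteEdges ↑F) < s →
        s ≤ numComp (G.deleteEdges ↑F) + n →
        weight w F ≤ (1 + ε) * ((numComp (G.deleteEdges ↑F) : ℝ) - 1) / (k : ℝ) →
        ∃ F' : Finset (Sym2 V), ↑F' ⊆ G.edgeSet ∧
          s ≤ numComp (G.deleteEdges ↑F') ∧
          numComp (G.deleteEdges ↑F') + 2 ≤ s + h ∧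
          weight w F' ≤ (1 + ε) * ((numComp (G.deleteEdges ↑F') : ℝ) - 1) / (k : ℝ) := by
      intro n
      induction n with
      | zero => intro F hF hlt hge; omega
      | succ n ih =>
        intro F hF hlt hge hinv
        set c := numComp (G.deleteEdges ↑F) with hcdef
        have hck : c ≤ k := numComp_le_card _
        have hc1 : 1 ≤ c := one_le_numComp _
        set m := k - c + 1 with hmdef
        have hmR : (m : ℝ) = (k : ℝ) - c + 1 := by
          rw [hmdef, Nat.cast_add, Nat.cast_sub hck, Nat.cast_one]
        have hcsR : (c : ℝ) + 1 ≤ (s : ℝ) := by exact_mod_cast hlt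
        have hc1R : (1 : ℝ) ≤ (c : ℝ) := by exact_mod_cast hc1
        have hskR : (s : ℝ) ≤ (k : ℝ) := by exact_mod_cast hs2
        -- m is big
        have hmbig : (1 + ε) * ((h : ℝ) - 1) + 1 + ε * ((s : ℝ) - 1) ≤ (m : ℝ) := by
          nlinarith [hkey, hcase, hmR, hcsR, hε, hh1R, hs2R]
        have hmh : (h : ℝ) ≤ (m : ℝ) := by nlinarith [hmbig, hε, hs2R, hh1R]
        have hmhN : h ≤ m := by exact_mod_cast hmh
        have hmpos : (0 : ℝ) < (m : ℝ) := by nlinarith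
        -- the split of everything remaining
        set S' := G.edgeFinset \ F with hS'def
        have hFE : F ⊆ G.edgeFinset := by
          intro e he
          rw [SimpleGraph.mem_edgeFinset]
          exact hF he
        have hbot2 : (G.deleteEdges ↑F).deleteEdges ↑S' = ⊥ := by
          ext a b
          simp only [SimpleGraph.deleteEdges_adj, hS'def, Finset.coe_sdiff, Set.mem_diff,
            Finset.mem_coe, SimpleGraph.mem_edgeFinset, SimpleGraph.mem_edgeSet,
            SimpleGraph.bot_adj, iff_false, not_and, not_not]
          tauto
        have hS'split : IsSplit (G.deleteEdges ↑F) S' m := by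
          constructor
          · intro e he
            rw [SimpleGraph.edgeSet_deleteEdges]
            simp only [hS'def, Finset.coe_sdiff, Set.mem_diff, Finset.mem_coe,
              SimpleGraph.mem_edgeFinset] at he ⊢
            exact he
          · rw [hbot2, numComp_bot, ← hcdef]
            omega
        have hwS' : weight w S' = 1 - weight w F := by
          have h0 : weight w S' + weight w F = weight w G.edgeFinset :=
            Finset.sum_sdiff (f := w) hFE
          rw [hnorm] at h0
          linarith
        obtain ⟨T, h', h2', h'h, ⟨hTsub, hTcomp⟩, hdens⟩ := hhyp F hF m hmhN S' hS'split
        have hTE : ∀ e ∈ T, e ∈ G.edgeSet ∧ e ∉ F := by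
          intro e he
          have := hTsub he
          rw [SimpleGraph.edgeSet_deleteEdges] at this
          exact ⟨this.1, fun hc => this.2 hc⟩
        have hF'sub : ↑(F ∪ T) ⊆ G.edgeSet := by
          rw [Finset.coe_union]
          intro e he
          rcases he with he | he
          · exact hF he
          · exact (hTE e he).1
        have hdisj : Disjoint F T :=
          Finset.disjoint_left.mpr fun e heF heT => (hTE e heT).2 heF
        have hwF' : weight w (F ∪ T) = weight w F + weight w T :=
          Finset.sum_union hdisj
        have hcomp' : numComp (G.deleteEdges ↑(F ∪ T)) = (h' - 1) + c := by
          rw [Finset.coe_union, ← SimpleGraph.deleteEdges_deleteEdges]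
          exact hTcomp
        -- the weight of T
        have hd1 : (1 : ℝ) ≤ (h' : ℝ) - 1 := by
          have : (2 : ℝ) ≤ (h' : ℝ) := by exact_mod_cast h2'
          linarith
        have hdh : (h' : ℝ) - 1 ≤ (h : ℝ) - 1 := by
          have : (h' : ℝ) ≤ (h : ℝ) := by exact_mod_cast h'h
          linarith
        have hdpos : (0 : ℝ) < (h' : ℝ) - 1 := by linarith
        rw [density, div_le_iff₀ hdpos] at hdens
        rw [hwS'] at hdens
        -- abbreviations
        set x := weight w F with hxdef
        set dR := (h' : ℝ) - 1 with hdRdef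
        have hx0 : 0 ≤ x := hwnn F hF
        have hTsub' : ↑T ⊆ G.edgeSet := fun e he => (hTE e he).1
        have hwT0 : 0 ≤ weight w T := hwnn T hTsub'
        have hx1 : x ≤ 1 := by
          have := hwnn S' (fun e he => by
            simp only [hS'def, Finset.coe_sdiff, Set.mem_diff, Finset.mem_coe,
              SimpleGraph.mem_edgeFinset] at he
            exact he.1)
          rw [hwS'] at this
          linarith
        set X := (1 + ε) * ((c : ℝ) - 1) / (k : ℝ) with hXdef
        have hcoef : dR * (1 + ε) / (m : ℝ) ≤ 1 := by
          rw [div_le_one hmpos]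
          nlinarith [hmbig, hdh, hε, hs2R]
        have hstep2 : x + dR * ((1 + ε) * (1 - x) / (m : ℝ)) ≤
            X + dR * ((1 + ε) * (1 - X) / (m : ℝ)) := by
          have e1 : ∀ y : ℝ, y + dR * ((1 + ε) * (1 - y) / (m : ℝ)) =
              y * (1 - dR * (1 + ε) / (m : ℝ)) + dR * (1 + ε) / (m : ℝ) := by
            intro y
            field_simp
            ring
          rw [e1 x, e1 X]
          have := mul_le_mul_of_nonneg_right hinv (by linarith : (0:ℝ) ≤ 1 - dR * (1 + ε) / (m : ℝ))
          linarith
        have hstep3 : X + dR * ((1 + ε) * (1 - X) / (m : ℝ)) ≤ X + dR * ((1 + ε) / (k : ℝ)) := by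
          have hkX : (k : ℝ) * (1 - X) ≤ (m : ℝ) := by
            have e2 : (k : ℝ) * (1 - X) = (k : ℝ) - (1 + ε) * ((c : ℝ) - 1) := by
              rw [hXdef]
              field_simp
            rw [e2, hmR]
            nlinarith [hε, hc1R]
          have hdR0 : (0 : ℝ) ≤ dR := by linarith
          have h3 : (1 + ε) * (1 - X) / (m : ℝ) ≤ (1 + ε) / (k : ℝ) := by
            rw [div_le_div_iff₀ hmpos hkpos]
            nlinarith [mul_le_mul_of_nonneg_left hkX (by linarith : (0:ℝ) ≤ 1 + ε)]
          have h4 := mul_le_mul_of_nonneg_left h3 hdR0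
          linarith [h4]
        have hstep4 : X + dR * ((1 + ε) / (k : ℝ)) = (1 + ε) * ((c : ℝ) + dR - 1) / (k : ℝ) := by
          rw [hXdef]
          field_simp
          ring
        have hinv' : weight w (F ∪ T) ≤
            (1 + ε) * ((numComp (G.deleteEdges ↑(F ∪ T)) : ℝ) - 1) / (k : ℝ) := by
          have hcastc' : ((numComp (G.deleteEdges ↑(F ∪ T)) : ℕ) : ℝ) = dR + (c : ℝ) := by
            rw [hcomp', Nat.cast_add, Nat.cast_sub (by omega : 1 ≤ h'), Nat.cast_one, hdRdef]
          rw [hwF', hcastc']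
          have hwTle : weight w T ≤ dR * ((1 + ε) * (1 - x) / (m : ℝ)) :=
            le_of_le_of_eq hdens (by ring)
          calc x + weight w T ≤ x + dR * ((1 + ε) * (1 - x) / (m : ℝ)) := by linarith
            _ ≤ X + dR * ((1 + ε) * (1 - X) / (m : ℝ)) := hstep2
            _ ≤ X + dR * ((1 + ε) / (k : ℝ)) := hstep3
            _ = (1 + ε) * ((c : ℝ) + dR - 1) / (k : ℝ) := hstep4
            _ = (1 + ε) * (dR + (c : ℝ) - 1) / (k : ℝ) := by ring
        by_cases hstop : s ≤ numComp (G.deleteEdges ↑(F ∪ T))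
        · exact ⟨F ∪ T, hF'sub, hstop, by omega, hinv'⟩
        · push_neg at hstop
          exact ih (F ∪ T) hF'sub hstop (by omega) hinv'
    -- run the greedy from ∅
    have hempty : numComp (G.deleteEdges ↑(∅ : Finset (Sym2 V))) = 1 := by
      simp only [Finset.coe_empty, SimpleGraph.deleteEdges_empty]
      exact hGcomp
    obtain ⟨F', hF'sub, hF'ge, hF'le, hF'wt⟩ := grow s ∅ (by simp)
      (by omega) (by omega)
      (by
        rw [hempty, weight]
        simp)
    refine finish F' hF'sub hF'ge ?_
    have hc'le : ((numComp (G.deleteEdges ↑F') : ℕ) : ℝ) ≤ (s : ℝ) + (h : ℝ) - 2 := by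
      have : (numComp (G.deleteEdges ↑F') : ℝ) + 2 ≤ (s : ℝ) + (h : ℝ) := by exact_mod_cast hF'le
      linarith
    have h1 : weight w F' * (k : ℝ) ≤ (1 + ε) * ((numComp (G.deleteEdges ↑F') : ℝ) - 1) := by
      have := mul_le_mul_of_nonneg_right hF'wt hkpos.le
      rwa [div_mul_cancel₀] at this
      exact hkpos.ne'
    calc weight w F' * (k : ℝ) ≤ (1 + ε) * ((numComp (G.deleteEdges ↑F') : ℝ) - 1) := h1
      _ ≤ (1 + ε) * ((s : ℝ) + (h : ℝ) - 3) := by nlinarith [hc'le, hε]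
      _ ≤ (1 + 2 * ε) * ((s : ℝ) - 1) := by nlinarith [hkey, hε, hh1R, hs2R]

end KCut
end
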